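/- arXiv:1708.05395 — 5 statements merged into one kernel-verified Lean document; each statement's English description precedes it below -/
import Mathlib

section
/- Suppose additionally that y < sqrt(1 - (x - 1/2)^2) + sqrt(3)/2 (region R1_2). Then the optimal radius for packings of 2 equal circles satisfies r_2(x,y) = sqrt(x^2 + y^2) * sqrt((x-1)^2 + y^2) / (4y). -/
noncomputable section

/-- The point `(a, b)` in the Euclidean plane. -/
def pt (a b : ℝ) : EuclideanSpace ℝ (Fin 2) :=
  (WithLp.equiv 2 (Fin 2 → ℝ)).symm ![a, b]

/-- The lattice generated by `v1 = (1,0)` and `v2 = (x,y)`. -/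
def TLat (x y : ℝ) : Set (EuclideanSpace ℝ (Fin 2)) :=
  {v | ∃ m n : ℤ, v = (m : ℝ) • pt 1 0 + (n : ℝ) • pt x y}

/-- `p` is a packing of `k` equal circles of radius `r` on the flat torus `ℝ²/Λ(x,y)`. -/
def IsPacking (x y : ℝ) {k : ℕ} (r : ℝ) (p : Fin k → EuclideanSpace ℝ (Fin 2)) : Prop :=
  ∀ i j : Fin k, ∀ l ∈ TLat x y, (i ≠ j ∨ l ≠ 0) → 2 * r ≤ ‖p i - p j + l‖

/-- The optimal (supremal) radius for packings of `k` equal circles on the torus `ℝ²/Λ(x,y)`. -/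
def optRadius (x y : ℝ) (k : ℕ) : ℝ :=
  sSup {r : ℝ | 0 ≤ r ∧ ∃ p : Fin k → EuclideanSpace ℝ (Fin 2), IsPacking x y r p}

/-! The optimal pair consists of a lattice point and the circumcenter `c` of the triangle
`0, (1,0), (x,y)`, with `2r = R := ‖c‖`.

Upper bound: if points `zᵢ` lie on a sphere of radius `R` about `c` and `v = ∑ wᵢ zᵢ` is a convex
combination, then `∑ wᵢ ‖v - zᵢ‖² = R² - ‖v - c‖²`, so some `zᵢ` is within `R` of `v`. Every point
of the plane lies, modulo `Λ`, in the triangle `0, v₁, v₂` or in its point reflection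
`v₁ + v₂ - ·`, hence within `R` of `Λ`; applied to the difference of two centres this gives `2r ≤ R`.

Lower bound: for `0 ≤ x ≤ 1/2 ≤ 1 ≤ x² + y²` the quantity `2mnx` lies between `0` and `mn`, which
reduces both `‖c - l‖ ≥ R` and `‖l‖ ≥ 1` (for `l ∈ Λ \ {0}`) to elementary facts about integers.
In region R1 moreover `R ≤ 1`, so the centres `0` and `c` form a packing with `2r = R`. -/

lemma sum_mul_norm_sub_sq {E ι : Type*} [NormedAddCommGroup E] [InnerProductSpace ℝ E]
    [Fintype ι] {w : ι → ℝ} {z : ι → E} {c : E} {R : ℝ} (hw : ∑ i, w i = 1)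
    (hz : ∀ i, ‖z i - c‖ = R) :
    ∑ i, w i * ‖∑ j, w j • z j - z i‖ ^ 2 = R ^ 2 - ‖∑ j, w j • z j - c‖ ^ 2 := by
  set v := ∑ j, w j • z j
  have hvc : ∑ i, w i • (z i - c) = v - c := by
    simp [smul_sub, Finset.sum_sub_distrib, ← Finset.sum_smul, hw, v]
  have expand : ∀ i, ‖v - z i‖ ^ 2 = ‖v - c‖ ^ 2 - 2 * inner ℝ (v - c) (z i - c) + R ^ 2 := by
    intro i
    rw [← hz i, ← norm_sub_sq_real]
    congr 2
    abel
  have hcross : ∑ i, w i * (2 * inner ℝ (v - c) (z i - c)) = 2 * ‖v - c‖ ^ 2 := by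
    simp_rw [mul_left_comm (w _), ← Finset.mul_sum, ← inner_smul_right, ← inner_sum, hvc,
      real_inner_self_eq_norm_sq]
  simp only [expand, mul_add, mul_sub, Finset.sum_add_distrib, Finset.sum_sub_distrib,
    ← Finset.sum_mul, hw, hcross]
  ring

theorem exists_dist_le_of_mem_convexHull {E : Type*} [NormedAddCommGroup E]
    [InnerProductSpace ℝ E] {s : Set E} {c : E} {R : ℝ} (hs : s ⊆ Metric.sphere c R) {v : E}
    (hv : v ∈ convexHull ℝ s) : ∃ p ∈ s, dist v p ≤ R := by
  obtain ⟨ι, _, w, z, hw0, hw1, hzs, rfl⟩ := mem_convexHull_iff_exists_fintype.mp hv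
  have : Nonempty ι := by
    by_contra h
    simp [not_nonempty_iff.mp h] at hw1
  obtain ⟨i, hi⟩ := Finite.exists_min fun i ↦ ‖∑ j, w j • z j - z i‖
  have hz : ∀ j, ‖z j - c‖ = R := fun j ↦ mem_sphere_iff_norm.mp (hs (hzs j))
  have hR : 0 ≤ R := hz i ▸ norm_nonneg _
  refine ⟨z i, hzs i, ?_⟩
  rw [dist_eq_norm, ← pow_le_pow_iff_left₀ (norm_nonneg _) hR two_ne_zero]
  calc ‖∑ j, w j • z j - z i‖ ^ 2 = ∑ j, w j * ‖∑ j, w j • z j - z i‖ ^ 2 := by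
        rw [← Finset.sum_mul, hw1, one_mul]
    _ ≤ ∑ j, w j * ‖∑ j, w j • z j - z j‖ ^ 2 := by
        gcongr with j
        exacts [hw0 j, hi j]
    _ = R ^ 2 - ‖∑ j, w j • z j - c‖ ^ 2 := sum_mul_norm_sub_sq hw1 hz
    _ ≤ R ^ 2 := sub_le_self _ (sq_nonneg _)

lemma intCast_mul_intCast_sub_one_nonneg (k : ℤ) : 0 ≤ (k : ℝ) * (k - 1) := by
  have : 0 ≤ k * (k - 1) := by rcases le_or_gt k 0 with h | h <;> nlinarith
  exact_mod_cast this

lemma one_le_sq_add_sq_of_ne_zero {m n : ℤ} (h : m ≠ 0 ∨ n ≠ 0) : 1 ≤ m ^ 2 + n ^ 2 := by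
  rcases h with h | h <;> nlinarith [sq_pos_of_ne_zero h, sq_nonneg m, sq_nonneg n]

lemma one_le_sq_add_mul_add_sq_of_ne_zero {m n : ℤ} (h : m ≠ 0 ∨ n ≠ 0) :
    1 ≤ m ^ 2 + m * n + n ^ 2 := by
  rcases h with h | h <;>
    nlinarith [sq_pos_of_ne_zero h, sq_nonneg (2 * m + n), sq_nonneg (m + 2 * n)]

@[simp] lemma pt_apply_zero (a b : ℝ) : pt a b 0 = a := rfl

@[simp] lemma pt_apply_one (a b : ℝ) : pt a b 1 = b := rfl

lemma norm_sq_eq_coords (v : EuclideanSpace ℝ (Fin 2)) : ‖v‖ ^ 2 = v 0 ^ 2 + v 1 ^ 2 := by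
  simp [EuclideanSpace.norm_sq_eq, Fin.sum_univ_two]

lemma smul_pt_add_smul_pt (x y a b : ℝ) :
    a • pt 1 0 + b • pt x y = pt (a + b * x) (b * y) := by
  ext i
  fin_cases i <;> simp [pt]

lemma TLat_eq_span (x y : ℝ) : TLat x y = Submodule.span ℤ {pt 1 0, pt x y} := by
  ext v
  simp [TLat, Submodule.mem_span_pair, Int.cast_smul_eq_zsmul, eq_comm]

lemma neg_mem_TLat {x y : ℝ} {l : EuclideanSpace ℝ (Fin 2)} (hl : l ∈ TLat x y) :
    -l ∈ TLat x y := by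
  rw [TLat_eq_span] at hl ⊢
  exact neg_mem hl

section Circumcenter

variable {x y : ℝ}

/-- The circumcenter of the triangle `0, (1, 0), (x, y)`. -/
def latticeCircumcenter (x y : ℝ) : EuclideanSpace ℝ (Fin 2) :=
  pt (1 / 2) ((x ^ 2 + y ^ 2 - x) / (2 * y))

lemma triangle_subset_sphere_latticeCircumcenter (hy : y ≠ 0) :
    {0, pt 1 0, pt x y} ⊆
      Metric.sphere (latticeCircumcenter x y) ‖latticeCircumcenter x y‖ := by
  simp only [Set.insert_subset_iff, Set.singleton_subset_iff, mem_sphere_iff_norm, zero_sub,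
    norm_neg, true_and]
  constructor <;>
  · rw [← sq_eq_sq₀ (norm_nonneg _) (norm_nonneg _), norm_sq_eq_coords, norm_sq_eq_coords]
    simp only [latticeCircumcenter, PiLp.sub_apply, pt_apply_zero, pt_apply_one]
    field_simp
    ring

lemma norm_latticeCircumcenter (hy : 0 < y) :
    ‖latticeCircumcenter x y‖ =
      Real.sqrt (x ^ 2 + y ^ 2) * Real.sqrt ((x - 1) ^ 2 + y ^ 2) / (2 * y) := by
  rw [← sq_eq_sq₀ (norm_nonneg _) (by positivity), norm_sq_eq_coords, div_pow, mul_pow,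
    Real.sq_sqrt (by positivity), Real.sq_sqrt (by positivity)]
  simp only [latticeCircumcenter, pt_apply_zero, pt_apply_one]
  field_simp
  ring

theorem exists_mem_TLat_norm_sub_le (hy : y ≠ 0) (v : EuclideanSpace ℝ (Fin 2)) :
    ∃ l ∈ TLat x y, ‖v - l‖ ≤ ‖latticeCircumcenter x y‖ := by
  set R := ‖latticeCircumcenter x y‖
  rw [TLat_eq_span]
  set Λ := Submodule.span ℤ {pt 1 0, pt x y}
  have hv₁ : pt 1 0 ∈ Λ := Submodule.subset_span (by simp)
  have hv₂ : pt x y ∈ Λ := Submodule.subset_span (by simp)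
  have triangle : ∀ s t : ℝ, 0 ≤ s → 0 ≤ t → s + t ≤ 1 →
      ∃ l ∈ Λ, ‖s • pt 1 0 + t • pt x y - l‖ ≤ R := by
    intro s t hs ht hst
    have hmem : s • pt 1 0 + t • pt x y ∈ convexHull ℝ {0, pt 1 0, pt x y} :=
      mem_convexHull_of_exists_fintype ![1 - s - t, s, t] ![0, pt 1 0, pt x y]
        (fun i ↦ by fin_cases i <;> simp <;> linarith)
        (by simp only [Fin.sum_univ_three, Matrix.cons_val_zero, Matrix.cons_val_one,
          Matrix.cons_val]; ring)
        (by simp [Fin.forall_fin_succ]) (by simp [Fin.sum_univ_three])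
    obtain ⟨p, hp, hdist⟩ := exists_dist_le_of_mem_convexHull
      (triangle_subset_sphere_latticeCircumcenter hy) hmem
    refine ⟨p, ?_, by rwa [← dist_eq_norm]⟩
    rcases hp with rfl | rfl | rfl
    exacts [zero_mem Λ, hv₁, hv₂]
  set β := v 1 / y
  set α := v 0 - β * x
  have hv : v = α • pt 1 0 + β • pt x y := by
    rw [smul_pt_add_smul_pt]
    ext i
    fin_cases i <;> simp [α, β, hy]
  set l₀ := ⌊α⌋ • pt 1 0 + ⌊β⌋ • pt x y
  have hl₀ : l₀ ∈ Λ := add_mem (zsmul_mem hv₁ _) (zsmul_mem hv₂ _)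
  have hvl₀ : v - l₀ = Int.fract α • pt 1 0 + Int.fract β • pt x y := by
    simp only [hv, l₀, Int.fract, sub_smul, ← Int.cast_smul_eq_zsmul ℝ]
    abel
  by_cases hst : Int.fract α + Int.fract β ≤ 1
  · obtain ⟨l, hl, hle⟩ := triangle _ _ (Int.fract_nonneg α) (Int.fract_nonneg β) hst
    refine ⟨l₀ + l, add_mem hl₀ hl, ?_⟩
    rwa [← sub_sub, hvl₀]
  · obtain ⟨l, hl, hle⟩ := triangle (1 - Int.fract α) (1 - Int.fract β)
      (by linarith [Int.fract_lt_one α]) (by linarith [Int.fract_lt_one β]) (by linarith)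
    refine ⟨l₀ + pt 1 0 + pt x y - l, sub_mem (add_mem (add_mem hl₀ hv₁) hv₂) hl, ?_⟩
    have hflip : -(v - (l₀ + pt 1 0 + pt x y - l)) =
        (1 - Int.fract α) • pt 1 0 + (1 - Int.fract β) • pt x y - l := by
      rw [sub_smul, sub_smul, one_smul, one_smul,
        show -(v - (l₀ + pt 1 0 + pt x y - l)) = pt 1 0 + pt x y - (v - l₀) - l by abel, hvl₀]
      abel
    rwa [← norm_neg, hflip]

theorem IsPacking.two_mul_le_norm_latticeCircumcenter {r : ℝ} {k : ℕ}
    {p : Fin k → EuclideanSpace ℝ (Fin 2)} (hp : IsPacking x y r p) (hy : y ≠ 0) {i j : Fin k}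
    (hij : i ≠ j) : 2 * r ≤ ‖latticeCircumcenter x y‖ := by
  obtain ⟨l, hl, hle⟩ := exists_mem_TLat_norm_sub_le hy (p i - p j)
  calc 2 * r ≤ ‖p i - p j + -l‖ := hp i j (-l) (neg_mem_TLat hl) (Or.inl hij)
    _ ≤ _ := by rwa [← sub_eq_add_neg]

theorem one_le_norm_of_mem_TLat (hxy : 1 ≤ x ^ 2 + y ^ 2) (hx0 : 0 ≤ x) (hx1 : x ≤ 1 / 2)
    {l : EuclideanSpace ℝ (Fin 2)} (hl : l ∈ TLat x y) (hl0 : l ≠ 0) : 1 ≤ ‖l‖ := by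
  obtain ⟨m, n, rfl⟩ := hl
  have hmn : m ≠ 0 ∨ n ≠ 0 := by
    by_contra! h
    simp [h.1, h.2] at hl0
  have h₁ : (1 : ℝ) ≤ m ^ 2 + n ^ 2 := by exact_mod_cast one_le_sq_add_sq_of_ne_zero hmn
  have h₂ : (1 : ℝ) ≤ m ^ 2 + m * n + n ^ 2 := by
    exact_mod_cast one_le_sq_add_mul_add_sq_of_ne_zero hmn
  have hQ : 1 ≤ ‖(m : ℝ) • pt 1 0 + (n : ℝ) • pt x y‖ ^ 2 := by
    rw [smul_pt_add_smul_pt, norm_sq_eq_coords, pt_apply_zero, pt_apply_one]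
    have hN : 0 ≤ (n : ℝ) ^ 2 * (x ^ 2 + y ^ 2 - 1) := mul_nonneg (sq_nonneg _) (by linarith)
    rcases le_total 0 ((m : ℝ) * n) with h | h
    · nlinarith [mul_nonneg h hx0]
    · nlinarith [mul_nonneg_of_nonpos_of_nonpos h (by linarith : 2 * x - 1 ≤ 0)]
  nlinarith [norm_nonneg ((m : ℝ) • pt 1 0 + (n : ℝ) • pt x y)]

theorem norm_latticeCircumcenter_le_norm_sub (hxy : 1 ≤ x ^ 2 + y ^ 2) (hy : y ≠ 0)
    (hx0 : 0 ≤ x) (hx1 : x ≤ 1 / 2) {l : EuclideanSpace ℝ (Fin 2)} (hl : l ∈ TLat x y) :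
    ‖latticeCircumcenter x y‖ ≤ ‖latticeCircumcenter x y - l‖ := by
  obtain ⟨m, n, rfl⟩ := hl
  rw [← sq_le_sq₀ (norm_nonneg _) (norm_nonneg _)]
  have hexpand : ‖latticeCircumcenter x y - ((m : ℝ) • pt 1 0 + (n : ℝ) • pt x y)‖ ^ 2 =
      ‖latticeCircumcenter x y‖ ^ 2 +
        (m * (m - 1) + 2 * x * (m * n) + n * (n - 1) * (x ^ 2 + y ^ 2)) := by
    simp only [smul_pt_add_smul_pt, norm_sq_eq_coords, latticeCircumcenter, PiLp.sub_apply,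
      pt_apply_zero, pt_apply_one]
    field_simp
    ring
  rw [hexpand, le_add_iff_nonneg_right]
  have hm := intCast_mul_intCast_sub_one_nonneg m
  have hn := intCast_mul_intCast_sub_one_nonneg n
  rcases le_total 0 ((m : ℝ) * n) with h | h
  · nlinarith [mul_nonneg h hx0, mul_nonneg hn (by linarith : (0 : ℝ) ≤ x ^ 2 + y ^ 2)]
  · have hmn := intCast_mul_intCast_sub_one_nonneg (m + n)
    push_cast at hmn
    nlinarith [mul_nonneg_of_nonpos_of_nonpos h (by linarith : 2 * x - 1 ≤ 0),
      mul_nonneg hn (by linarith : (0 : ℝ) ≤ x ^ 2 + y ^ 2 - 1)]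

theorem norm_latticeCircumcenter_le_one (hxy : 1 ≤ x ^ 2 + y ^ 2) (hy : 0 < y)
    (hx0 : 0 ≤ x) (hx1 : x ≤ 1 / 2)
    (hreg : y < Real.sqrt (1 - (x - 1 / 2) ^ 2) + Real.sqrt 3 / 2) :
    ‖latticeCircumcenter x y‖ ≤ 1 := by
  have h3 : Real.sqrt 3 ^ 2 = 3 := Real.sq_sqrt (by norm_num)
  have hs : Real.sqrt (1 - (x - 1 / 2) ^ 2) ^ 2 = 1 - (x - 1 / 2) ^ 2 :=
    Real.sq_sqrt (by nlinarith)
  have hy3 : Real.sqrt 3 / 2 ≤ y := by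
    rw [div_le_iff₀ two_pos, Real.sqrt_le_left (by positivity)]
    nlinarith
  -- `(x, y)` lies in the disc of radius 1 about `(1/2, √3/2)`
  have hdisc : (y - Real.sqrt 3 / 2) ^ 2 ≤ 1 - (x - 1 / 2) ^ 2 := by
    rw [← hs]
    exact pow_le_pow_left₀ (by linarith) (by linarith) 2
  have hlin : x ^ 2 + y ^ 2 - x ≤ Real.sqrt 3 * y := by nlinarith
  have hsq : (x ^ 2 + y ^ 2 - x) ^ 2 ≤ 3 * y ^ 2 :=
    calc (x ^ 2 + y ^ 2 - x) ^ 2 ≤ (Real.sqrt 3 * y) ^ 2 :=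
          pow_le_pow_left₀ (by nlinarith) hlin 2
      _ = 3 * y ^ 2 := by rw [mul_pow, h3]
  rw [← sq_le_one_iff₀ (norm_nonneg _), norm_sq_eq_coords]
  simp only [latticeCircumcenter, pt_apply_zero, pt_apply_one, div_pow]
  rw [div_add_div _ _ (by norm_num) (by positivity), div_le_one (by positivity)]
  nlinarith

theorem isPacking_zero_latticeCircumcenter (hxy : 1 ≤ x ^ 2 + y ^ 2) (hy : y ≠ 0)
    (hx0 : 0 ≤ x) (hx1 : x ≤ 1 / 2) (hR : ‖latticeCircumcenter x y‖ ≤ 1) :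
    IsPacking x y (‖latticeCircumcenter x y‖ / 2) ![0, latticeCircumcenter x y] := by
  have hself : ∀ l ∈ TLat x y, l ≠ 0 → ‖latticeCircumcenter x y‖ ≤ ‖l‖ :=
    fun l hl hl0 ↦ hR.trans (one_le_norm_of_mem_TLat hxy hx0 hx1 hl hl0)
  have hhole := fun l (hl : l ∈ TLat x y) ↦
    norm_latticeCircumcenter_le_norm_sub hxy hy hx0 hx1 hl
  simp only [IsPacking, Fin.forall_fin_two, mul_div_cancel₀ _ (two_ne_zero' ℝ),
    Matrix.cons_val_zero, Matrix.cons_val_one, Matrix.cons_val_fin_one, sub_self, zero_sub,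
    sub_zero, zero_add, ne_eq, not_true_eq_false, false_or, zero_ne_one, one_ne_zero,
    not_false_eq_true, true_or, forall_const]
  refine ⟨⟨hself, fun l hl ↦ ?_⟩, fun l hl ↦ ?_, hself⟩
  · rw [neg_add_eq_sub, norm_sub_rev]
    exact hhole l hl
  · simpa using hhole (-l) (neg_mem_TLat hl)

end Circumcenter

theorem two_circles_region_R1 (x y : ℝ) (hxy : 1 ≤ x ^ 2 + y ^ 2) (hy : 0 < y) (hx0 : 0 ≤ x) (hx1 : x ≤ 1 / 2)
    (hreg : y < Real.sqrt (1 - (x - 1 / 2) ^ 2) + Real.sqrt 3 / 2)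
    : optRadius x y 2 = Real.sqrt (x ^ 2 + y ^ 2) * Real.sqrt ((x - 1) ^ 2 + y ^ 2) / (4 * y) := by
  have hmax : IsGreatest {r : ℝ | 0 ≤ r ∧ ∃ p : Fin 2 → EuclideanSpace ℝ (Fin 2), IsPacking x y r p}
      (‖latticeCircumcenter x y‖ / 2) := by
    refine ⟨⟨by positivity, _, isPacking_zero_latticeCircumcenter hxy hy.ne' hx0 hx1
      (norm_latticeCircumcenter_le_one hxy hy hx0 hx1 hreg)⟩, ?_⟩
    rintro r ⟨-, p, hp⟩
    have := hp.two_mul_le_norm_latticeCircumcenter hy.ne' (i := 0) (j := 1) (by decide)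
    linarith
  rw [optRadius, hmax.csSup_eq, norm_latticeCircumcenter hy, div_div]
  ring
end
end

section
/- Suppose additionally that sqrt(1/3 - x^2) + sqrt(3)/3 <= y < sqrt(1 - x^2) + sqrt(3) (region R2_3). Then the optimal radius for packings of 3 equal circles satisfies r_3(x,y) = (1/6) * sqrt(9x^2 + (y - sqrt(3 + 4y^2 - 12x^2))^2). -/
noncomputable section

set_option maxHeartbeats 2000000

namespace R3R2aux

lemma lat_eq (x y : ℝ) (m n : ℤ) : (m : ℝ) • pt 1 0 + (n : ℝ) • pt x y = pt (m + n*x) (n*y) := by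
  ext i; fin_cases i <;> simp [pt]

lemma pt_zero : pt 0 0 = 0 := by ext i; fin_cases i <;> simp [pt]

lemma pt_eq_zero {a b : ℝ} (h : pt a b = 0) : a = 0 ∧ b = 0 := by
  constructor
  · have := congrArg (· 0) h; simpa [pt] using this
  · have := congrArg (· 1) h; simpa [pt] using this

lemma sub_add_pt (u v : EuclideanSpace ℝ (Fin 2)) (a b : ℝ) :
    u - v + pt a b = pt (u 0 - v 0 + a) (u 1 - v 1 + b) := by
  ext i; fin_cases i <;> simp [pt]

lemma norm_pt (a b : ℝ) : ‖pt a b‖ = Real.sqrt (a^2 + b^2) := by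
  rw [EuclideanSpace.norm_eq]
  simp [pt, Fin.sum_univ_two, sq_abs]

lemma pt_app0 (a b : ℝ) : pt a b 0 = a := by simp [pt]

lemma pt_app1 (a b : ℝ) : pt a b 1 = b := by simp [pt]

lemma le_norm_pt {d a b : ℝ} (hd : 0 ≤ d) (h : d^2 ≤ a^2 + b^2) : d ≤ ‖pt a b‖ := by
  rw [norm_pt]
  exact (Real.le_sqrt hd (by positivity)).2 h

lemma sq_le_of_le_norm_pt {d a b : ℝ} (hd : 0 ≤ d) (h : d ≤ ‖pt a b‖) : d^2 ≤ a^2 + b^2 := by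
  rw [norm_pt] at h
  nlinarith [Real.sq_sqrt (by positivity : (0:ℝ) ≤ a^2+b^2), Real.sqrt_nonneg (a^2+b^2)]

lemma pair_ineq {d a b a' b' u v : ℝ} (hd : 0 ≤ d)
    (h : d^2 ≤ (a - a' + u)^2 + (b - b' + v)^2) :
    d ≤ ‖pt a b - pt a' b' + pt u v‖ := by
  rw [sub_add_pt]
  apply le_norm_pt hd
  simpa [pt_app0, pt_app1] using h

theorem spread (D a b a' b' : ℝ) (h0 : 0 ≤ a') (h1 : a' ≤ a) (h2 : a ≤ b) (h3 : b ≤ b')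
    (h4 : b' ≤ D) (hsum : a + b = a' + b') :
    Real.sqrt (D^2-a'^2) + Real.sqrt (D^2-b'^2) ≤ Real.sqrt (D^2-a^2) + Real.sqrt (D^2-b^2) := by
  set Ga := Real.sqrt (D^2-a^2) with hGa
  set Gb := Real.sqrt (D^2-b^2) with hGb
  set Ga' := Real.sqrt (D^2-a'^2) with hGa'
  set Gb' := Real.sqrt (D^2-b'^2) with hGb'
  have hGa2 : Ga^2 = D^2-a^2 := Real.sq_sqrt (by nlinarith)
  have hGb2 : Gb^2 = D^2-b^2 := Real.sq_sqrt (by nlinarith)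
  have hGa'2 : Ga'^2 = D^2-a'^2 := Real.sq_sqrt (by nlinarith)
  have hGb'2 : Gb'^2 = D^2-b'^2 := Real.sq_sqrt (by nlinarith)
  have p1 : 0 ≤ Ga := Real.sqrt_nonneg _
  have p2 : 0 ≤ Gb := Real.sqrt_nonneg _
  have p3 : 0 ≤ Ga' := Real.sqrt_nonneg _
  have p4 : 0 ≤ Gb' := Real.sqrt_nonneg _
  have q1 : Ga ≤ Ga' := Real.sqrt_le_sqrt (by nlinarith)
  have q2 : Gb' ≤ Gb := Real.sqrt_le_sqrt (by nlinarith)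
  have q3 : Gb ≤ Ga := Real.sqrt_le_sqrt (by nlinarith)
  have q4 : Gb' ≤ Ga' := Real.sqrt_le_sqrt (by nlinarith)
  have e1 : (Ga'-Ga)*(Ga+Ga') = (a-a')*(a+a') := by linear_combination hGa'2 - hGa2
  have e2 : (Gb-Gb')*(Ga+Ga') ≥ (b'-b)*(b'+b) := by
    have e2' : (Gb-Gb')*(Gb+Gb') = (b'-b)*(b'+b) := by linear_combination hGb2 - hGb'2
    nlinarith [mul_le_mul_of_nonneg_left (show Gb+Gb' ≤ Ga+Ga' by linarith) (show (0:ℝ) ≤ Gb - Gb' by linarith)]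
  have c1 : (a-a')*(a+a') ≤ (b'-b)*(b'+b) := by
    nlinarith [mul_le_mul_of_nonneg_left (show a+a' ≤ b'+b by linarith) (show (0:ℝ) ≤ a - a' by linarith)]
  have key : (Ga'-Ga)*(Ga+Ga') ≤ (Gb-Gb')*(Ga+Ga') := by linarith
  rcases eq_or_lt_of_le (by linarith : (0:ℝ) ≤ Ga + Ga') with hz | hz
  · have hb0 : Gb = 0 := by linarith
    have hb0' : Gb' = 0 := by linarith
    linarith
  · have := le_of_mul_le_mul_right key hz
    linarith

theorem lemB' (D x c1 c2 c3 : ℝ) (hD : 1/2 ≤ D) (hx0 : 0 ≤ x) (hx1 : x ≤ 1/2)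
    (hc1 : 0 ≤ c1) (hc1' : c1 ≤ 1/2) (hc2 : 0 ≤ c2) (hc2' : c2 ≤ 1/2)
    (hc3 : 0 ≤ c3) (hc3' : c3 ≤ 1/2) (hsum : c1 + c2 + c3 ≤ 1 + x) (h12 : c1 ≤ c2) :
    2 * Real.sqrt (D^2-(1/2)^2) + Real.sqrt (D^2-x^2)
      ≤ Real.sqrt (D^2-c1^2) + Real.sqrt (D^2-c2^2) + Real.sqrt (D^2-c3^2) := by
  have hD0 : (0:ℝ) ≤ D := by linarith
  have mono : ∀ u v : ℝ, 0 ≤ u → u ≤ v → Real.sqrt (D^2-v^2) ≤ Real.sqrt (D^2-u^2) := by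
    intro u v hu huv
    exact Real.sqrt_le_sqrt (by nlinarith)
  have sqD : Real.sqrt (D^2 - 0^2) = D := by
    rw [show D^2 - 0^2 = D^2 by ring, Real.sqrt_sq hD0]
  have hDx : Real.sqrt (D^2-x^2) ≤ D := by
    calc Real.sqrt (D^2-x^2) ≤ Real.sqrt (D^2) := Real.sqrt_le_sqrt (by nlinarith)
    _ = D := Real.sqrt_sq hD0
  rcases le_total (c1 + c2) (1/2) with hcc | hcc
  · have s1 := spread D c1 c2 0 (c1+c2) le_rfl hc1 h12 (by linarith) (by linarith) (by ring)
    rw [sqD] at s1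
    have m1 : Real.sqrt (D^2-(1/2)^2) ≤ Real.sqrt (D^2-(c1+c2)^2) := mono _ _ (by linarith) hcc
    have m3 : Real.sqrt (D^2-(1/2)^2) ≤ Real.sqrt (D^2-c3^2) := mono _ _ hc3 hc3'
    linarith
  · obtain ⟨e, he⟩ : ∃ e : ℝ, e = c1 + c2 - 1/2 := ⟨_, rfl⟩
    have s1 := spread D c1 c2 e (1/2) (by rw [he]; linarith) (by rw [he]; linarith) h12 hc2' hD (by rw [he]; ring)
    have key : Real.sqrt (D^2-(1/2)^2) + Real.sqrt (D^2-x^2)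
        ≤ Real.sqrt (D^2-e^2) + Real.sqrt (D^2-c3^2) := by
      have he0 : 0 ≤ e := by rw [he]; linarith
      have he1 : e ≤ 1/2 := by rw [he]; linarith
      rcases le_total (e + c3) (1/2) with hec | hec
      · have m1 : Real.sqrt (D^2-(1/2)^2) ≤ Real.sqrt (D^2-(e+c3)^2) := mono _ _ (by linarith) hec
        rcases le_total e c3 with h' | h'
        · have s2 := spread D e c3 0 (e+c3) le_rfl he0 h' (by linarith) (by linarith) (by ring)
          rw [sqD] at s2; linarith
        · have s2 := spread D c3 e 0 (e+c3) le_rfl hc3 h' (by linarith) (by linarith) (by ring)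
          rw [sqD] at s2; linarith
      · obtain ⟨f, hf⟩ : ∃ f : ℝ, f = e + c3 - 1/2 := ⟨_, rfl⟩
        have hf0 : 0 ≤ f := by rw [hf]; linarith
        have hfx : f ≤ x := by rw [hf, he]; linarith
        have m1 : Real.sqrt (D^2-x^2) ≤ Real.sqrt (D^2-f^2) := mono _ _ hf0 hfx
        rcases le_total e c3 with h' | h'
        · have s2 := spread D e c3 f (1/2) hf0 (by rw [hf]; linarith) h' hc3' hD (by rw [hf]; ring)
          linarith
        · have s2 := spread D c3 e f (1/2) hf0 (by rw [hf]; linarith) h' he1 hD (by rw [hf]; ring)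
          linarith
    linarith

theorem lemB (D x c1 c2 c3 : ℝ) (hD : 1/2 ≤ D) (hx0 : 0 ≤ x) (hx1 : x ≤ 1/2)
    (hc1 : 0 ≤ c1) (hc1' : c1 ≤ 1/2) (hc2 : 0 ≤ c2) (hc2' : c2 ≤ 1/2)
    (hc3 : 0 ≤ c3) (hc3' : c3 ≤ 1/2) (hsum : c1 + c2 + c3 ≤ 1 + x) :
    2 * Real.sqrt (D^2-(1/2)^2) + Real.sqrt (D^2-x^2)
      ≤ Real.sqrt (D^2-c1^2) + Real.sqrt (D^2-c2^2) + Real.sqrt (D^2-c3^2) := by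
  rcases le_total c1 c2 with h | h
  · exact lemB' D x c1 c2 c3 hD hx0 hx1 hc1 hc1' hc2 hc2' hc3 hc3' hsum h
  · have := lemB' D x c2 c1 c3 hD hx0 hx1 hc2 hc2' hc1 hc1' hc3 hc3' (by linarith) h
    linarith

theorem gapfact (D w g : ℝ) (hg : 0 ≤ g) (hA : ∀ m : ℤ, D^2 ≤ (w+m)^2+g^2) :
    ∃ u c : ℝ, u = Int.fract w ∧ c = min u (1-u) ∧ 0 ≤ c ∧ c ≤ 1/2 ∧ c ≤ u ∧ u ≤ 1 - c ∧
      Real.sqrt (D^2 - c^2) ≤ g := by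
  refine ⟨Int.fract w, min (Int.fract w) (1 - Int.fract w), rfl, rfl, ?_, ?_, ?_, ?_, ?_⟩
  · exact le_min (Int.fract_nonneg w) (by linarith [Int.fract_lt_one w])
  · rcases le_total (Int.fract w) (1 - Int.fract w) with h | h
    · rw [min_eq_left h]; linarith
    · rw [min_eq_right h]; linarith
  · exact min_le_left _ _
  · linarith [min_le_right (Int.fract w) (1 - Int.fract w)]
  · have h1 := hA (-⌊w⌋)
    have h2 := hA (-⌊w⌋ - 1)
    have e1 : w + ((-⌊w⌋ : ℤ) : ℝ) = Int.fract w := by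
      rw [Int.fract]; push_cast; ring
    have e2 : w + ((-⌊w⌋ - 1 : ℤ) : ℝ) = Int.fract w - 1 := by
      rw [Int.fract]; push_cast; ring
    rw [e1] at h1; rw [e2] at h2
    have key : D^2 ≤ (min (Int.fract w) (1 - Int.fract w))^2 + g^2 := by
      rcases le_total (Int.fract w) (1 - Int.fract w) with h | h
      · rw [min_eq_left h]; exact h1
      · rw [min_eq_right h]; nlinarith
    calc Real.sqrt (D^2 - (min (Int.fract w) (1 - Int.fract w))^2)
        ≤ Real.sqrt (g^2) := Real.sqrt_le_sqrt (by linarith)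
      _ = g := Real.sqrt_sq hg

theorem core (x y D d : ℝ) (hx0 : 0 ≤ x) (hx1 : x ≤ 1/2) (hy : 0 < y)
    (hdD : d < D) (hd12 : 1/2 ≤ d)
    (hphi : 2*Real.sqrt (d^2-(1/2)^2) + Real.sqrt (d^2-x^2) = y)
    (b0 b1 b2 t0 t1 t2 : ℝ)
    (ht0 : 0 ≤ t0) (ht01 : t0 ≤ t1) (ht12 : t1 ≤ t2) (ht2 : t2 < y)
    (h01 : ∀ m n : ℤ, D^2 ≤ (b1-b0+m+n*x)^2+(t1-t0+n*y)^2)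
    (h12 : ∀ m n : ℤ, D^2 ≤ (b2-b1+m+n*x)^2+(t2-t1+n*y)^2)
    (h02 : ∀ m n : ℤ, D^2 ≤ (b0-b2+m+n*x)^2+(t0-t2+n*y)^2) : False := by
  obtain ⟨u1, c1, hu1, hc1, hc10, hc12, hcu1, hu1', hg1⟩ :=
    gapfact D (b1-b0) (t1-t0) (by linarith)
      (fun m => by have := h01 m 0; push_cast at this; linarith [this])
  obtain ⟨u2, c2, hu2, hc2, hc20, hc22, hcu2, hu2', hg2⟩ :=
    gapfact D (b2-b1) (t2-t1) (by linarith)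
      (fun m => by have := h12 m 0; push_cast at this; linarith [this])
  obtain ⟨u3, c3, hu3, hc3, hc30, hc32, hcu3, hu3', hg3⟩ :=
    gapfact D (b0-b2+x) (t0-t2+y) (by linarith)
      (fun m => by have := h02 m 1; push_cast at this
                   have e : b0-b2+(m:ℝ)+1*x = b0-b2+x+m := by ring
                   rw [e] at this
                   have e2 : t0-t2+1*y = t0-t2+y := by ring
                   rw [e2] at this; linarith)
  have hsumc : c1 + c2 + c3 ≤ 1 + x := by
    by_contra hcon
    push_neg at hcon
    have hufr : u1 + u2 + u3 = x - ((⌊b1-b0⌋ + ⌊b2-b1⌋ + ⌊b0-b2+x⌋ : ℤ) : ℝ) := by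
      rw [hu1, hu2, hu3]; unfold Int.fract; push_cast; ring
    set K : ℤ := ⌊b1-b0⌋ + ⌊b2-b1⌋ + ⌊b0-b2+x⌋ with hK
    have hlow : 1 + x < u1 + u2 + u3 := by linarith
    have hhigh : u1 + u2 + u3 < 2 - x := by linarith
    have h1 : (1 : ℝ) < -K := by rw [hufr] at hlow; push_cast; linarith
    have h2 : (-K : ℝ) < 2 := by rw [hufr] at hhigh; push_cast; linarith
    have h1' : (1 : ℤ) < -K := by exact_mod_cast h1
    have h2' : (-K : ℤ) < 2 := by exact_mod_cast h2
    omega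
  have hD12 : 1/2 ≤ D := by linarith
  have hB := lemB D x c1 c2 c3 hD12 hx0 hx1 hc10 hc12 hc20 hc22 hc30 hc32 hsumc
  have m1 : Real.sqrt (d^2-(1/2)^2) < Real.sqrt (D^2-(1/2)^2) := by
    apply Real.sqrt_lt_sqrt (by nlinarith) (by nlinarith)
  have m2 : Real.sqrt (d^2-x^2) ≤ Real.sqrt (D^2-x^2) := by
    apply Real.sqrt_le_sqrt; nlinarith
  linarith

theorem a1 (x y q r : ℝ) (hx0 : 0 ≤ x) (hx1 : x ≤ 1/2) (hq0 : 0 ≤ q) (hq2 : q^2 = 1/3 - x^2)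
    (hr0 : 0 ≤ r) (hr2 : r^2 = 1/3) (hreg1 : q + r ≤ y) : 3/4 ≤ y^2 := by
  have e : (q*r)^2 = (1/3 - x^2)*(1/3) := by rw [mul_pow, hq2, hr2]
  have hqr0 : 0 ≤ q*r := mul_nonneg hq0 hr0
  have key : (x^2+1/12)^2 ≤ (2*(q*r))^2 := by
    have e4 : (2*(q*r))^2 = 4*((1/3 - x^2)*(1/3)) := by rw [mul_pow]; rw [mul_pow] at e; nlinarith [e]
    nlinarith [e4, mul_nonneg (by nlinarith : (0:ℝ) ≤ 1/4 - x^2) (by positivity : (0:ℝ) ≤ x^2+7/4)]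
  have hXpos : (0:ℝ) < x^2+1/12+2*(q*r) := by nlinarith [sq_nonneg x]
  have h2qr : x^2 + 1/12 ≤ 2*(q*r) := by nlinarith [key, hXpos]
  nlinarith [hreg1, hq0, hr0]

theorem a2 (x y q r s : ℝ) (hx1 : x ≤ 1/2) (hq0 : 0 ≤ q) (hq2 : q^2 = 1/3 - x^2)
    (hr0 : 0 ≤ r) (hr2 : r^2 = 1/3) (hreg1 : q + r ≤ y)
    (hs0 : 0 ≤ s) (hs2 : s^2 = 3 + 4*y^2 - 12*x^2) : y + 3*q ≤ s := by
  nlinarith [sq_nonneg (y - q - r), sq_nonneg (s - y - 3*q), sq_nonneg (s + y + 3*q)]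

theorem a3 (x y s p c : ℝ) (hy : 0 < y) (hp0 : 0 ≤ p) (hp2 : p^2 = 1 - x^2)
    (hc0 : 0 ≤ c) (hc2 : c^2 = 3) (hreg2 : y < p + c)
    (hs0 : 0 ≤ s) (hs2 : s^2 = 3 + 4*y^2 - 12*x^2) (hsy : y ≤ s) :
    9*x^2 + (s-y)^2 ≤ 9 := by
  have hsyp : s ≤ y + 3*p := by
    rcases le_or_gt y p with hyp | hyp
    · nlinarith [mul_nonneg hy.le hp0, sq_nonneg (s - y - 3*p), sq_nonneg (s + y + 3*p)]
    · nlinarith [sq_nonneg (y - p - c), sq_nonneg (s - y - 3*p), sq_nonneg (s + y + 3*p)]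
  nlinarith [hp2, hsy]

theorem a4 (x y q r s : ℝ) (hy : 0 < y) (hx0 : 0 ≤ x) (hx1 : x ≤ 1/2)
    (hq0 : 0 ≤ q) (hq2 : q^2 = 1/3 - x^2) (hr0 : 0 ≤ r) (hr2 : r^2 = 1/3)
    (hreg1 : q + r ≤ y) (hs0 : 0 ≤ s) (hs2 : s^2 = 3 + 4*y^2 - 12*x^2) :
    y^2 + 3*x - 3*x^2 ≤ y * s := by
  have hsq3 : y + 3*q ≤ s := a2 x y q r s hx1 hq0 hq2 hr0 hr2 hreg1 hs0 hs2
  have hqr : x - 1/3 ≤ q*r := by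
    rcases le_or_gt x (1/3) with hcc | hcc
    · nlinarith [mul_nonneg hq0 hr0]
    · nlinarith [mul_nonneg hq0 hr0, sq_nonneg (q*r - (x - 1/3)), sq_nonneg (q*r + (x-1/3))]
  have h3 : x - x^2 ≤ y*q := by nlinarith [mul_le_mul_of_nonneg_right hreg1 hq0]
  nlinarith [mul_le_mul_of_nonneg_left hsq3 hy.le]

theorem a5 (x y s : ℝ) (hy34 : 3/4 ≤ y^2) (hx2 : x^2 ≤ 1/4) (hy : 0 < y)
    (hs0 : 0 ≤ s) (hs2 : s^2 = 3 + 4*y^2 - 12*x^2) : y ≤ s ∧ s ≤ 4*y := by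
  constructor
  · nlinarith [sq_nonneg (s+y), sq_nonneg (s-y)]
  · have hpos : (0:ℝ) < s + 4*y := by positivity
    nlinarith

theorem a6 (x y s d : ℝ) (hy34 : 3/4 ≤ y^2) (hx2 : x^2 ≤ 1/4) (hy : 0 < y) (hd0 : 0 ≤ d)
    (hs0 : 0 ≤ s) (hs2 : s^2 = 3 + 4*y^2 - 12*x^2) (hd2 : d^2 = x^2 + (s-y)^2/9) : d ≤ y := by
  have hsq : d^2 ≤ y^2 := by nlinarith [mul_nonneg hs0 hy.le]
  nlinarith [sq_nonneg (d-y), sq_nonneg (d+y)]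

theorem a7 (d : ℝ) (hd0 : 0 ≤ d) (hd3 : 1/3 ≤ d^2) : 1/2 ≤ d := by
  nlinarith

theorem algFacts (x y q r s p c d t h : ℝ)
    (hy : 0 < y) (hx0 : 0 ≤ x) (hx1 : x ≤ 1/2)
    (hq0 : 0 ≤ q) (hq2 : q^2 = 1/3 - x^2)
    (hr0 : 0 ≤ r) (hr2 : r^2 = 1/3)
    (hp0 : 0 ≤ p) (hp2 : p^2 = 1 - x^2)
    (hc0 : 0 ≤ c) (hc2 : c^2 = 3)
    (hs0 : 0 ≤ s) (hs2 : s^2 = 3 + 4*y^2 - 12*x^2)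
    (hd0 : 0 ≤ d) (hd2 : d^2 = x^2 + (s-y)^2/9)
    (ht : t = (4*y - s)/6) (hh : h = (s - y)/3)
    (hreg1 : q + r ≤ y) (hreg2 : y < p + c) :
    (y ≤ s) ∧ (0 ≤ h) ∧ (0 ≤ t) ∧ (2*t+h = y) ∧ (1/4 + t^2 = d^2) ∧
    (x^2+h^2 = d^2) ∧ (1/3 ≤ d^2) ∧ (d^2 ≤ 1) ∧ (d ≤ y) ∧ (x - x^2 ≤ h*y) ∧ (1/2 ≤ d) := by
  have hx2 : x^2 ≤ 1/4 := by nlinarith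
  have hy34 : 3/4 ≤ y^2 := a1 x y q r hx0 hx1 hq0 hq2 hr0 hr2 hreg1
  obtain ⟨hsy, hs4y⟩ := a5 x y s hy34 hx2 hy hs0 hs2
  have hh0 : 0 ≤ h := by rw [hh]; linarith
  have ht0 : 0 ≤ t := by rw [ht]; linarith
  have hty : 2*t+h = y := by rw [ht, hh]; ring
  have htd : 1/4 + t^2 = d^2 := by rw [ht, hd2]; linear_combination (-1/12) * hs2
  have hhd : x^2 + h^2 = d^2 := by rw [hh, hd2]; ring
  have hsq3 : y + 3*q ≤ s := a2 x y q r s hx1 hq0 hq2 hr0 hr2 hreg1 hs0 hs2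
  have hd3 : 1/3 ≤ d^2 := by nlinarith [hsq3, hq2, hd2, hsy]
  have hd1 : d^2 ≤ 1 := by
    have := a3 x y s p c hy hp0 hp2 hc0 hc2 hreg2 hs0 hs2 hsy
    linarith [hd2, this]
  have hyd : d ≤ y := a6 x y s d hy34 hx2 hy hd0 hs0 hs2 hd2
  have hF5 : x - x^2 ≤ h*y := by
    have hkey := a4 x y q r s hy hx0 hx1 hq0 hq2 hr0 hr2 hreg1 hs0 hs2
    rw [hh]; nlinarith [hkey]
  exact ⟨hsy, hh0, ht0, hty, htd, hhd, hd3, hd1, hyd, hF5, a7 d hd0 hd3⟩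

theorem floorb (z y : ℝ) (hy : 0 < y) : (⌊z/y⌋:ℝ)*y ≤ z ∧ z < (⌊z/y⌋:ℝ)*y + y := by
  have h1 := Int.floor_le (z/y)
  have h2 := Int.lt_floor_add_one (z/y)
  have e0 : z/y*y = z := div_mul_cancel₀ _ (ne_of_gt hy)
  constructor
  · have := mul_le_mul_of_nonneg_right h1 hy.le
    rw [e0] at this; exact this
  · have := mul_lt_mul_of_pos_right h2 hy
    rw [e0] at this
    have e : ((⌊z/y⌋:ℝ)+1)*y = (⌊z/y⌋:ℝ)*y + y := by ring
    linarith [this, e.le, e.ge]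

section Lfacts
variable {x y d t h : ℝ}
variable (hx0 : 0 ≤ x) (hx1 : x ≤ 1/2) (hy : 0 < y)
  (hd0 : 0 ≤ d) (hd1 : d^2 ≤ 1) (hd3 : 1/3 ≤ d^2)
  (hyd : d ≤ y) (ht : 0 ≤ t) (hh : 0 ≤ h) (hsum : 2*t+h = y)
  (htd : 1/4 + t^2 = d^2) (hhd : x^2 + h^2 = d^2) (hF5 : x - x^2 ≤ h*y)

include hx0 hx1 hy hd0 hd1 hd3 hyd ht hh hsum htd hhd hF5

lemma L0 (m n : ℤ) (hmn : ¬(m = 0 ∧ n = 0)) : d^2 ≤ ((m:ℝ)+n*x)^2+((n:ℝ)*y)^2 := by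
  have hd2y : d^2 ≤ y^2 := by nlinarith [mul_self_le_mul_self hd0 hyd]
  rcases eq_or_ne n 0 with hn | hn
  · subst hn
    have hm : m ≤ -1 ∨ 1 ≤ m := by omega
    have hm2 : (1:ℝ) ≤ (m:ℝ)^2 := by
      rcases hm with hm | hm
      · have : (m:ℝ) ≤ -1 := by exact_mod_cast hm
        nlinarith [sq_nonneg ((m:ℝ)+1)]
      · have : (1:ℝ) ≤ m := by exact_mod_cast hm
        nlinarith [sq_nonneg ((m:ℝ)-1)]
    push_cast
    nlinarith
  · have hn' : n ≤ -1 ∨ 1 ≤ n := by omega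
    have hn2 : (1:ℝ) ≤ (n:ℝ)^2 := by
      rcases hn' with hn' | hn'
      · have : (n:ℝ) ≤ -1 := by exact_mod_cast hn'
        nlinarith [sq_nonneg ((n:ℝ)+1)]
      · have : (1:ℝ) ≤ n := by exact_mod_cast hn'
        nlinarith [sq_nonneg ((n:ℝ)-1)]
    nlinarith [sq_nonneg ((m:ℝ)+n*x), mul_le_mul_of_nonneg_right hn2 (sq_nonneg y)]

lemma key1 : d^2 ≤ (1/2-x)^2 + (t+h)^2 := by
  have e : h*(2*t+h) = h*y := by rw [hsum]
  nlinarith [e, hF5]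

lemma L1 (m n : ℤ) : d^2 ≤ (1/2+(m:ℝ)+n*x)^2+(t+(n:ℝ)*y)^2 := by
  obtain hn | hn | hn | hn | hn : n ≤ -2 ∨ n = -1 ∨ n = 0 ∨ n = 1 ∨ 2 ≤ n := by omega
  · have hn' : (n:ℝ) ≤ -2 := by exact_mod_cast hn
    have hv : t + n*y ≤ -(2*t+2*h) := by nlinarith
    nlinarith [sq_nonneg (1/2+(m:ℝ)+n*x), sq_nonneg (t+h), sq_nonneg h, sq_nonneg t, mul_nonneg ht hh]
  · subst hn
    have hk := key1 hx0 hx1 hy hd0 hd1 hd3 hyd ht hh hsum htd hhd hF5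
    have hv : (t+((-1:ℤ):ℝ)*y)^2 = (t+h)^2 := by push_cast; nlinarith [hsum]
    rw [hv]
    have hhor : (1/2-x)^2 ≤ (1/2+(m:ℝ)+((-1:ℤ):ℝ)*x)^2 := by
      push_cast
      have hm : m ≤ -1 ∨ 0 ≤ m := by omega
      rcases hm with hm | hm
      · have : (m:ℝ) ≤ -1 := by exact_mod_cast hm
        nlinarith
      · have : (0:ℝ) ≤ m := by exact_mod_cast hm
        nlinarith
    linarith
  · subst hn
    have hhor : (1/4 : ℝ) ≤ (1/2+(m:ℝ)+((0:ℤ):ℝ)*x)^2 := by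
      push_cast
      have hm : m ≤ -1 ∨ 0 ≤ m := by omega
      rcases hm with hm | hm
      · have : (m:ℝ) ≤ -1 := by exact_mod_cast hm
        nlinarith
      · have : (0:ℝ) ≤ m := by exact_mod_cast hm
        nlinarith
    push_cast
    push_cast at hhor
    nlinarith
  · subst hn
    push_cast
    nlinarith [sq_nonneg (1/2+(m:ℝ)+x)]
  · have hn' : (2:ℝ) ≤ n := by exact_mod_cast hn
    have hvy : y ≤ t + n*y := by nlinarith
    nlinarith [sq_nonneg (1/2+(m:ℝ)+n*x), mul_self_le_mul_self (le_of_lt hy) hvy, mul_self_le_mul_self hd0 hyd]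

lemma L2 (m n : ℤ) : d^2 ≤ ((m:ℝ)+n*x)^2+(2*t+(n:ℝ)*y)^2 := by
  obtain hn | hn | hn | hn | hn : n ≤ -2 ∨ n = -1 ∨ n = 0 ∨ n = 1 ∨ 2 ≤ n := by omega
  · have hn' : (n:ℝ) ≤ -2 := by exact_mod_cast hn
    have hv : 2*t + n*y ≤ -(2*t+2*h) := by nlinarith
    nlinarith [sq_nonneg ((m:ℝ)+n*x), mul_nonneg ht hh]
  · subst hn
    have hv : (2*t+((-1:ℤ):ℝ)*y)^2 = h^2 := by push_cast; nlinarith [hsum]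
    rw [hv]
    have hhor : x^2 ≤ ((m:ℝ)+((-1:ℤ):ℝ)*x)^2 := by
      push_cast
      obtain hm | hm | hm : m ≤ -1 ∨ m = 0 ∨ 1 ≤ m := by omega
      · have : (m:ℝ) ≤ -1 := by exact_mod_cast hm
        nlinarith
      · subst hm; push_cast; nlinarith
      · have : (1:ℝ) ≤ m := by exact_mod_cast hm
        nlinarith
    linarith
  · subst hn
    obtain hm | hm : m = 0 ∨ (m ≤ -1 ∨ 1 ≤ m) := by omega
    · subst hm; push_cast; nlinarith
    · have : (1:ℝ) ≤ |(m:ℝ)| := by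
        rcases hm with hm | hm
        · have : (m:ℝ) ≤ -1 := by exact_mod_cast hm
          rw [abs_of_nonpos (by linarith)]; linarith
        · have : (1:ℝ) ≤ m := by exact_mod_cast hm
          rw [abs_of_nonneg (by linarith)]; linarith
      push_cast
      nlinarith [sq_abs ((m:ℝ)), sq_nonneg (2*t)]
  · subst hn
    push_cast
    nlinarith [sq_nonneg ((m:ℝ)+x)]
  · have hn' : (2:ℝ) ≤ n := by exact_mod_cast hn
    have hvy : y ≤ 2*t + n*y := by nlinarith
    nlinarith [sq_nonneg ((m:ℝ)+n*x), mul_self_le_mul_self (le_of_lt hy) hvy, mul_self_le_mul_self hd0 hyd]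

lemma L3 (m n : ℤ) : d^2 ≤ (-(1/2)+(m:ℝ)+n*x)^2+(t+(n:ℝ)*y)^2 := by
  obtain hn | hn | hn | hn | hn : n ≤ -2 ∨ n = -1 ∨ n = 0 ∨ n = 1 ∨ 2 ≤ n := by omega
  · have hn' : (n:ℝ) ≤ -2 := by exact_mod_cast hn
    have hv : t + n*y ≤ -(2*t+2*h) := by nlinarith
    nlinarith [sq_nonneg (-(1/2)+(m:ℝ)+n*x), mul_nonneg ht hh]
  · subst hn
    have hk := key1 hx0 hx1 hy hd0 hd1 hd3 hyd ht hh hsum htd hhd hF5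
    have hv : (t+((-1:ℤ):ℝ)*y)^2 = (t+h)^2 := by push_cast; nlinarith [hsum]
    rw [hv]
    have hhor : (1/2-x)^2 ≤ (-(1/2)+(m:ℝ)+((-1:ℤ):ℝ)*x)^2 := by
      push_cast
      have hm : m ≤ 0 ∨ 1 ≤ m := by omega
      rcases hm with hm | hm
      · have : (m:ℝ) ≤ 0 := by exact_mod_cast hm
        nlinarith
      · have : (1:ℝ) ≤ m := by exact_mod_cast hm
        nlinarith
    linarith
  · subst hn
    have hhor : (1/4 : ℝ) ≤ (-(1/2)+(m:ℝ)+((0:ℤ):ℝ)*x)^2 := by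
      push_cast
      have hm : m ≤ 0 ∨ 1 ≤ m := by omega
      rcases hm with hm | hm
      · have : (m:ℝ) ≤ 0 := by exact_mod_cast hm
        nlinarith
      · have : (1:ℝ) ≤ m := by exact_mod_cast hm
        nlinarith
    push_cast
    push_cast at hhor
    nlinarith
  · subst hn
    push_cast
    nlinarith [sq_nonneg (-(1/2)+(m:ℝ)+x)]
  · have hn' : (2:ℝ) ≤ n := by exact_mod_cast hn
    have hvy : y ≤ t + n*y := by nlinarith
    nlinarith [sq_nonneg (-(1/2)+(m:ℝ)+n*x), mul_self_le_mul_self (le_of_lt hy) hvy, mul_self_le_mul_self hd0 hyd]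

theorem packing_lb : IsPacking x y (d/2) ![pt 0 0, pt (1/2) t, pt 0 (2*t)] := by
  intro i j l hl hne
  obtain ⟨m, n, rfl⟩ := hl
  rw [lat_eq] at hne ⊢
  have h2r : 2 * (d/2) = d := by ring
  rw [h2r]
  have hL0 : ∀ (m n : ℤ), ¬(m = 0 ∧ n = 0) → d^2 ≤ ((m:ℝ)+n*x)^2+((n:ℝ)*y)^2 :=
    fun m n hmn => L0 hx0 hx1 hy hd0 hd1 hd3 hyd ht hh hsum htd hhd hF5 m n hmn
  have hL1 : ∀ (m n : ℤ), d^2 ≤ (1/2+(m:ℝ)+n*x)^2+(t+(n:ℝ)*y)^2 :=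
    fun m n => L1 hx0 hx1 hy hd0 hd1 hd3 hyd ht hh hsum htd hhd hF5 m n
  have hL2 : ∀ (m n : ℤ), d^2 ≤ ((m:ℝ)+n*x)^2+(2*t+(n:ℝ)*y)^2 :=
    fun m n => L2 hx0 hx1 hy hd0 hd1 hd3 hyd ht hh hsum htd hhd hF5 m n
  have hL3 : ∀ (m n : ℤ), d^2 ≤ (-(1/2)+(m:ℝ)+n*x)^2+(t+(n:ℝ)*y)^2 :=
    fun m n => L3 hx0 hx1 hy hd0 hd1 hd3 hyd ht hh hsum htd hhd hF5 m n
  have hzero : ∀ m n : ℤ, (pt ((m:ℝ) + (n:ℝ)*x) ((n:ℝ)*y) ≠ 0) → ¬(m = 0 ∧ n = 0) := by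
    rintro m n hne0 ⟨rfl, rfl⟩
    apply hne0
    convert pt_zero using 2 <;> push_cast <;> ring
  fin_cases i <;> fin_cases j
  -- (0,0)
  · rcases hne with hne | hne
    · exact absurd rfl hne
    · exact pair_ineq hd0 (by nlinarith [hL0 m n (hzero m n hne)])
  -- (0,1)
  · refine pair_ineq hd0 ?_
    have := hL1 (-m) (-n); push_cast at this; nlinarith [this]
  -- (0,2)
  · refine pair_ineq hd0 ?_
    have := hL2 (-m) (-n); push_cast at this; nlinarith [this]
  -- (1,0)
  · exact pair_ineq hd0 (by nlinarith [hL1 m n])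
  -- (1,1)
  · rcases hne with hne | hne
    · exact absurd rfl hne
    · exact pair_ineq hd0 (by nlinarith [hL0 m n (hzero m n hne)])
  -- (1,2)
  · refine pair_ineq hd0 ?_
    have := hL3 (-m) (-n); push_cast at this; nlinarith [this]
  -- (2,0)
  · exact pair_ineq hd0 (by nlinarith [hL2 m n])
  -- (2,1)
  · exact pair_ineq hd0 (by nlinarith [hL3 m n])
  -- (2,2)
  · rcases hne with hne | hne
    · exact absurd rfl hne
    · exact pair_ineq hd0 (by nlinarith [hL0 m n (hzero m n hne)])

end Lfacts
end R3R2aux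

open R3R2aux in
theorem three_circles_region_R2 (x y : ℝ) (hxy : 1 ≤ x ^ 2 + y ^ 2) (hy : 0 < y) (hx0 : 0 ≤ x) (hx1 : x ≤ 1 / 2)
    (hreg1 : Real.sqrt (1 / 3 - x ^ 2) + Real.sqrt 3 / 3 ≤ y) (hreg2 : y < Real.sqrt (1 - x ^ 2) + Real.sqrt 3)
    : optRadius x y 3 = 1 / 6 * Real.sqrt (9 * x ^ 2 + (y - Real.sqrt (3 + 4 * y ^ 2 - 12 * x ^ 2)) ^ 2) := by
  have hx2 : x^2 ≤ 1/4 := by nlinarith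
  have hq2 : (Real.sqrt (1 / 3 - x ^ 2))^2 = 1/3 - x^2 := Real.sq_sqrt (by nlinarith)
  have hr2 : (Real.sqrt 3 / 3)^2 = (1:ℝ)/3 := by
    rw [div_pow, Real.sq_sqrt] <;> norm_num
  have hp2 : (Real.sqrt (1 - x ^ 2))^2 = 1 - x^2 := Real.sq_sqrt (by nlinarith)
  have hc2 : (Real.sqrt 3)^2 = (3:ℝ) := Real.sq_sqrt (by norm_num)
  have hs_arg : (0:ℝ) ≤ 3 + 4 * y ^ 2 - 12 * x ^ 2 := by
    have hy34 := a1 x y (Real.sqrt (1 / 3 - x ^ 2)) (Real.sqrt 3 / 3) hx0 hx1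
      (Real.sqrt_nonneg _) hq2 (by positivity) hr2 hreg1
    nlinarith
  have hs2 : (Real.sqrt (3 + 4 * y ^ 2 - 12 * x ^ 2))^2 = 3 + 4*y^2 - 12*x^2 := Real.sq_sqrt hs_arg
  have hd_arg : (0:ℝ) ≤ 9*x^2 + (y - Real.sqrt (3 + 4 * y ^ 2 - 12 * x ^ 2))^2 := by positivity
  have hd0 : (0:ℝ) ≤ 1/3 * Real.sqrt (9 * x ^ 2 + (y - Real.sqrt (3 + 4 * y ^ 2 - 12 * x ^ 2)) ^ 2) := by
    positivity
  have hd2 : (1/3 * Real.sqrt (9 * x ^ 2 + (y - Real.sqrt (3 + 4 * y ^ 2 - 12 * x ^ 2)) ^ 2))^2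
      = x^2 + (Real.sqrt (3 + 4 * y ^ 2 - 12 * x ^ 2) - y)^2/9 := by
    rw [mul_pow, Real.sq_sqrt (by positivity)]; ring
  obtain ⟨hsy, hh0, ht0, hty, htd, hhd, hd3, hd1, hyd, hF5, hd12⟩ :=
    algFacts x y (Real.sqrt (1 / 3 - x ^ 2)) (Real.sqrt 3 / 3)
      (Real.sqrt (3 + 4 * y ^ 2 - 12 * x ^ 2)) (Real.sqrt (1 - x ^ 2)) (Real.sqrt 3)
      (1/3 * Real.sqrt (9 * x ^ 2 + (y - Real.sqrt (3 + 4 * y ^ 2 - 12 * x ^ 2)) ^ 2))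
      ((4*y - Real.sqrt (3 + 4 * y ^ 2 - 12 * x ^ 2))/6)
      ((Real.sqrt (3 + 4 * y ^ 2 - 12 * x ^ 2) - y)/3)
      hy hx0 hx1 (Real.sqrt_nonneg _) hq2 (by positivity) hr2 (Real.sqrt_nonneg _) hp2
      (Real.sqrt_nonneg _) hc2 (Real.sqrt_nonneg _) hs2 hd0 hd2 rfl rfl hreg1 hreg2
  set s := Real.sqrt (3 + 4 * y ^ 2 - 12 * x ^ 2) with hsdef
  set d := 1/3 * Real.sqrt (9 * x ^ 2 + (y - s) ^ 2) with hddef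
  set t := (4*y - s)/6 with htdef
  set h := (s - y)/3 with hhdef
  have hmem : d/2 ∈ {r : ℝ | 0 ≤ r ∧ ∃ p : Fin 3 → EuclideanSpace ℝ (Fin 2), IsPacking x y r p} := by
    exact ⟨by linarith, _, packing_lb hx0 hx1 hy hd0 hd1 hd3 hyd ht0 hh0 hty htd hhd hF5⟩
  have hub : ∀ a ∈ {r : ℝ | 0 ≤ r ∧ ∃ p : Fin 3 → EuclideanSpace ℝ (Fin 2), IsPacking x y r p}, a ≤ d/2 := by
    rintro a ⟨ha0, p, hp⟩
    by_contra hcon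
    push_neg at hcon
    have hdD : d < 2*a := by linarith
    have hD0 : (0:ℝ) ≤ 2*a := by linarith
    have hphi : 2*Real.sqrt (d^2-(1/2)^2) + Real.sqrt (d^2-x^2) = y := by
      have e1 : d^2 - (1/2)^2 = t^2 := by linear_combination -htd
      have e2 : d^2 - x^2 = h^2 := by linear_combination -hhd
      rw [e1, e2, Real.sqrt_sq ht0, Real.sqrt_sq hh0]
      linarith
    obtain ⟨K, hK⟩ : ∃ K : Fin 3 → ℤ, ∀ i, K i = ⌊p i 1 / y⌋ := ⟨_, fun _ => rfl⟩
    obtain ⟨T, hT⟩ : ∃ T : Fin 3 → ℝ, ∀ i, T i = p i 1 - (K i : ℝ)*y := ⟨_, fun _ => rfl⟩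
    obtain ⟨B, hB⟩ : ∃ B : Fin 3 → ℝ, ∀ i, B i = p i 0 - (K i : ℝ)*x := ⟨_, fun _ => rfl⟩
    have hT0 : ∀ i, 0 ≤ T i := by
      intro i
      have h1 := (floorb (p i 1) y hy).1
      rw [hT i, hK i]
      linarith [h1]
    have hTy : ∀ i, T i < y := by
      intro i
      have h2 := (floorb (p i 1) y hy).2
      rw [hT i, hK i]
      linarith [h2]
    have H : ∀ i j : Fin 3, i ≠ j → ∀ m n : ℤ, (2*a)^2 ≤ (B i - B j + m + n*x)^2 + (T i - T j + n*y)^2 := by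
      intro i j hij m n
      have hl : ((m:ℤ):ℝ) • pt 1 0 + (((n + K j - K i : ℤ)):ℝ) • pt x y ∈ TLat x y :=
        ⟨m, n + K j - K i, rfl⟩
      have hle := hp i j _ hl (Or.inl hij)
      rw [lat_eq] at hle
      rw [sub_add_pt] at hle
      have hsq := sq_le_of_le_norm_pt hD0 hle
      have e1 : p i 0 - p j 0 + ((m:ℝ) + ((n + K j - K i : ℤ):ℝ) * x)
          = B i - B j + (m:ℝ) + (n:ℝ)*x := by
        rw [hB i, hB j]; push_cast; ring
      have e2 : p i 1 - p j 1 + ((n + K j - K i : ℤ):ℝ) * y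
          = T i - T j + (n:ℝ)*y := by
        rw [hT i, hT j]; push_cast; ring
      rw [e1, e2] at hsq
      exact hsq
    have main : ∀ i0 i1 i2 : Fin 3, i1 ≠ i0 → i2 ≠ i1 → i0 ≠ i2 →
        T i0 ≤ T i1 → T i1 ≤ T i2 → False := by
      intro i0 i1 i2 h10 h21 h02' hle1 hle2
      exact core x y (2*a) d hx0 hx1 hy hdD hd12 hphi (B i0) (B i1) (B i2)
        (T i0) (T i1) (T i2) (hT0 i0) hle1 hle2 (hTy i2)
        (H i1 i0 h10) (H i2 i1 h21) (H i0 i2 h02')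
    rcases le_total (T 0) (T 1) with h01 | h01
    · rcases le_total (T 1) (T 2) with h12 | h12
      · exact main 0 1 2 (by decide) (by decide) (by decide) h01 h12
      · rcases le_total (T 0) (T 2) with h02 | h02
        · exact main 0 2 1 (by decide) (by decide) (by decide) h02 h12
        · exact main 2 0 1 (by decide) (by decide) (by decide) h02 h01
    · rcases le_total (T 0) (T 2) with h02 | h02
      · exact main 1 0 2 (by decide) (by decide) (by decide) h01 h02
      · rcases le_total (T 1) (T 2) with h12 | h12
        · exact main 1 2 0 (by decide) (by decide) (by decide) h12 h02
        · exact main 2 1 0 (by decide) (by decide) (by decide) h12 h01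
  have hsup : optRadius x y 3 = d/2 := by
    unfold optRadius
    exact le_antisymm (csSup_le ⟨d/2, hmem⟩ hub) (le_csSup ⟨d/2, hub⟩ hmem)
  rw [hsup, hddef]
  ring
end
end

section
/- Suppose additionally that y >= sqrt(1 - x^2) + sqrt(3) (region R3_3). Then the optimal radius for packings of 3 equal circles satisfies r_3(x,y) = 1/2. -/
noncomputable section

/-! Every circle of radius `r` meets its own translate by `(1, 0)` as soon as `r > 1/2`. Radius
`1/2` is attained by three rows of unit-spaced circles: rows `0` and `1` are stacked as in the
hexagonal packing, row `2` sits on row `1` shifted by the unit vector `(x, √(1 - x²))`, and the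
translate of row `0` by `(x, y)` is then offset by `1/2` from row `2`, at height `√3/2` or more
above it exactly when `y ≥ √(1 - x²) + √3`. -/

lemma norm_pt (a b : ℝ) : ‖pt a b‖ = √(a ^ 2 + b ^ 2) := by
  simp [EuclideanSpace.norm_eq, pt, Fin.sum_univ_two, sq_abs]

lemma pt_add_pt (a b c d : ℝ) : pt a b + pt c d = pt (a + c) (b + d) := by
  ext i; fin_cases i <;> simp [pt]

lemma pt_sub_pt (a b c d : ℝ) : pt a b - pt c d = pt (a - c) (b - d) := by
  ext i; fin_cases i <;> simp [pt]

lemma lattice_eq_pt (x y : ℝ) (m n : ℤ) :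
    (m : ℝ) • pt 1 0 + (n : ℝ) • pt x y = pt (m + n * x) (n * y) := by
  ext i; fin_cases i <;> simp [pt]

lemma pt_add_lattice (u v x y : ℝ) (m n : ℤ) :
    pt u v + ((m : ℝ) • pt 1 0 + (n : ℝ) • pt x y) = pt (u + m + n * x) (v + n * y) := by
  rw [lattice_eq_pt, pt_add_pt, add_assoc]

/-- Circles of radius `1/2` whose centres differ by `d` do not overlap in the torus. -/
def Separated (x y : ℝ) (d : EuclideanSpace ℝ (Fin 2)) : Prop :=
  ∀ l ∈ TLat x y, 1 ≤ ‖d + l‖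

lemma Separated.neg {x y : ℝ} {d : EuclideanSpace ℝ (Fin 2)} (h : Separated x y d) :
    Separated x y (-d) := fun l hl => by
  rw [show -d + l = -(d + -l) by abel, norm_neg]
  exact h _ (neg_mem_TLat hl)

lemma separated_pt_iff {x y u v : ℝ} :
    Separated x y (pt u v) ↔ ∀ m n : ℤ, 1 ≤ (u + m + n * x) ^ 2 + (v + n * y) ^ 2 := by
  constructor
  · intro h m n
    simpa only [pt_add_lattice, norm_pt, Real.one_le_sqrt] using h _ ⟨m, n, rfl⟩
  · rintro h _ ⟨m, n, rfl⟩
    rw [pt_add_lattice, norm_pt, Real.one_le_sqrt]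
    exact h m n

lemma isPacking_half {x y : ℝ} {k : ℕ} {p : Fin k → EuclideanSpace ℝ (Fin 2)}
    (hlat : ∀ l ∈ TLat x y, l ≠ 0 → 1 ≤ ‖l‖)
    (hsep : ∀ i j, i < j → Separated x y (p j - p i)) : IsPacking x y (1 / 2) p := by
  intro i j l hl hij
  rw [show 2 * (1 / 2 : ℝ) = 1 by norm_num]
  rcases lt_trichotomy i j with h | rfl | h
  · simpa [neg_sub] using (hsep i j h).neg l hl
  · simpa using hlat l hl (hij.resolve_left (not_not_intro rfl))
  · exact hsep j i h l hl

lemma le_half_of_isPacking {x y r : ℝ} {k : ℕ} (hk : 0 < k) {p : Fin k → EuclideanSpace ℝ (Fin 2)}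
    (hp : IsPacking x y r p) : r ≤ 1 / 2 := by
  have hnorm : ‖pt 1 0‖ = 1 := by simp [norm_pt]
  have hmem : pt 1 0 ∈ TLat x y := ⟨1, 0, by simp⟩
  have hne : pt 1 0 ≠ 0 := norm_ne_zero_iff.mp (by simp [hnorm])
  have := hp ⟨0, hk⟩ ⟨0, hk⟩ _ hmem (Or.inr hne)
  rw [sub_self, zero_add, hnorm] at this
  linarith

lemma optRadius_eq_half {x y : ℝ} {k : ℕ} (hk : 0 < k) {p : Fin k → EuclideanSpace ℝ (Fin 2)}
    (hp : IsPacking x y (1 / 2) p) : optRadius x y k = 1 / 2 :=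
  le_antisymm (csSup_le ⟨_, by norm_num, p, hp⟩ fun _ ⟨_, _, hq⟩ => le_half_of_isPacking hk hq)
    (le_csSup ⟨1 / 2, fun _ ⟨_, _, hq⟩ => le_half_of_isPacking hk hq⟩ ⟨by norm_num, p, hp⟩)

lemma one_le_sq_add_int_mul {c y : ℝ} (h₁ : 1 ≤ y + c) (h₂ : 1 ≤ y - c) {n : ℤ} (hn : n ≠ 0) :
    1 ≤ (c + n * y) ^ 2 := by
  have hy : 0 ≤ y := by linarith
  rcases hn.lt_or_gt with hn | hn
  · have hn : (n : ℝ) ≤ -1 := by exact_mod_cast Int.le_sub_one_of_lt hn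
    nlinarith [mul_le_mul_of_nonneg_right hn hy]
  · have hn : (1 : ℝ) ≤ n := by exact_mod_cast hn
    nlinarith [mul_le_mul_of_nonneg_right hn hy]

lemma quarter_le_sq_half_add_int (m : ℤ) : 1 / 4 ≤ (1 / 2 + (m : ℝ)) ^ 2 := by
  rcases le_or_gt 0 m with hm | hm
  · have : (0 : ℝ) ≤ m := by exact_mod_cast hm
    nlinarith
  · have : (m : ℝ) ≤ -1 := by exact_mod_cast Int.le_sub_one_of_lt hm
    nlinarith

lemma one_le_norm_of_mem_TLat_s4 {x y : ℝ} (hy : 1 ≤ y) :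
    ∀ l ∈ TLat x y, l ≠ 0 → 1 ≤ ‖l‖ := by
  rintro _ ⟨m, n, rfl⟩ hl
  rw [lattice_eq_pt, norm_pt, Real.one_le_sqrt]
  rcases eq_or_ne n 0 with rfl | hn
  · have hm : m ≠ 0 := by rintro rfl; simp at hl
    have : (1 : ℝ) ≤ |(m : ℝ)| := by exact_mod_cast Int.one_le_abs hm
    simp only [Int.cast_zero, zero_mul, add_zero]
    nlinarith [sq_abs (m : ℝ)]
  · nlinarith [sq_nonneg ((m : ℝ) + n * x),
      one_le_sq_add_int_mul (y := y) (c := 0) (by linarith) (by linarith) hn]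

lemma one_le_sqrt_three : 1 ≤ √3 := Real.one_le_sqrt.mpr (by norm_num)

lemma sq_sqrt_three : √3 ^ 2 = 3 := Real.sq_sqrt (by norm_num)

lemma separated_hexagonal_offset {x y : ℝ} (hy : 1 + √3 / 2 ≤ y) :
    Separated x y (pt (1 / 2) (√3 / 2)) := by
  refine separated_pt_iff.mpr fun m n => ?_
  rcases eq_or_ne n 0 with rfl | hn
  · simp only [Int.cast_zero, zero_mul, add_zero]
    nlinarith [quarter_le_sq_half_add_int m, sq_sqrt_three]
  · nlinarith [sq_nonneg (1 / 2 + m + n * x),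
      one_le_sq_add_int_mul (y := y) (c := √3 / 2) (by linarith [Real.sqrt_nonneg 3])
        (by linarith) hn]

lemma separated_unit_offset {x y a : ℝ} (hx : |x| ≤ 1 / 2) (ha₀ : 0 ≤ a) (ha : x ^ 2 + a ^ 2 = 1)
    (hy : 1 + a ≤ y) : Separated x y (pt x a) := by
  refine separated_pt_iff.mpr fun m n => ?_
  rcases eq_or_ne n 0 with rfl | hn
  · obtain ⟨hx₁, hx₂⟩ := abs_le.mp hx
    have : 0 ≤ (m : ℝ) * (m + 2 * x) := by
      rcases lt_trichotomy m 0 with hm | rfl | hm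
      · have : (m : ℝ) ≤ -1 := by exact_mod_cast Int.le_sub_one_of_lt hm
        nlinarith
      · simp
      · have : (1 : ℝ) ≤ m := by exact_mod_cast hm
        nlinarith
    simp only [Int.cast_zero, zero_mul, add_zero]
    nlinarith
  · nlinarith [sq_nonneg (x + m + n * x),
      one_le_sq_add_int_mul (y := y) (c := a) (by linarith) (by linarith) hn]

lemma separated_stacked_offset {x y a : ℝ} (ha : 1 ≤ √3 / 2 + a)
    (hy : a + √3 ≤ y) : Separated x y (pt (x + 1 / 2) (√3 / 2 + a)) := by
  refine separated_pt_iff.mpr fun m n => ?_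
  rcases eq_or_ne n (-1) with rfl | hn
  · have : x + 1 / 2 + m + ((-1 : ℤ) : ℝ) * x = 1 / 2 + m := by push_cast; ring
    rw [this]
    nlinarith [quarter_le_sq_half_add_int m, sq_sqrt_three, one_le_sqrt_three]
  · have hshift : √3 / 2 + a - y + ((n + 1 : ℤ) : ℝ) * y = √3 / 2 + a + n * y := by
      push_cast; ring
    have := one_le_sq_add_int_mul (y := y) (c := √3 / 2 + a - y) (by linarith)
      (by linarith [one_le_sqrt_three]) (n := n + 1) (by omega)
    rw [hshift] at this
    nlinarith [sq_nonneg (x + 1 / 2 + m + n * x)]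

theorem three_circles_region_R3_general (x y : ℝ) (hx0 : 0 ≤ x) (hx1 : x ≤ 1 / 2)
    (hreg : Real.sqrt (1 - x ^ 2) + Real.sqrt 3 ≤ y)
    : optRadius x y 3 = 1 / 2 := by
  set a := √(1 - x ^ 2)
  have ha₀ : 0 ≤ a := Real.sqrt_nonneg _
  have ha : x ^ 2 + a ^ 2 = 1 := by rw [Real.sq_sqrt (by nlinarith)]; ring
  have ha_ge : √3 / 2 ≤ a := Real.le_sqrt_of_sq_le (by nlinarith [sq_sqrt_three])
  have hs := one_le_sqrt_three
  refine optRadius_eq_half (p := ![pt 0 0, pt (1 / 2) (√3 / 2), pt (x + 1 / 2) (√3 / 2 + a)])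
    (by norm_num) (isPacking_half (one_le_norm_of_mem_TLat_s4 (by linarith)) ?_)
  intro i j hij
  fin_cases i <;> fin_cases j <;> simp at hij <;>
    simp only [Fin.reduceFinMk, Matrix.cons_val_zero, Matrix.cons_val_one, Matrix.cons_val_two,
      Matrix.head_cons, Matrix.tail_cons, pt_sub_pt, sub_zero, add_sub_cancel_left,
      add_sub_cancel_right]
  · exact separated_hexagonal_offset (by linarith)
  · exact separated_stacked_offset (by linarith) hreg
  · exact separated_unit_offset (abs_le.mpr ⟨by linarith, hx1⟩) ha₀ ha (by linarith)

theorem three_circles_region_R3 (x y : ℝ) (hxy : 1 ≤ x ^ 2 + y ^ 2) (hy : 0 < y) (hx0 : 0 ≤ x) (hx1 : x ≤ 1 / 2)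
    (hreg : Real.sqrt (1 - x ^ 2) + Real.sqrt 3 ≤ y)
    : optRadius x y 3 = 1 / 2 :=
  three_circles_region_R3_general x y hx0 hx1 hreg
end
end

section
/- Suppose additionally that sqrt(1/3 - x^2) + sqrt(3)/3 <= y < sqrt(1 - x^2) + sqrt(3) (region R2_3). Let r = (1/6) * sqrt(9x^2 + (y - sqrt(3 + 4y^2 - 12x^2))^2) and R = sqrt(16*r^2 - 1). Then the configuration p : Fin 3 -> R^2 given by p 0 = (0,0), p 1 = (1/2, -R/2), p 2 = (1/2, R/2) is a packing of 3 equal circles of radius r on the flat torus R^2/Lambda; that is, ||p i - p j + lambda|| >= 2r for all i, j in Fin 3 and all lambda in Lambda with (i ≠ j or lambda ≠ 0). -/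
noncomputable section

lemma pt_add (a b c d : ℝ) : pt a b + pt c d = pt (a+c) (b+d) := by
  simp [pt, ← WithLp.toLp_add]

lemma pt_sub (a b c d : ℝ) : pt a b - pt c d = pt (a-c) (b-d) := by
  simp [pt, ← WithLp.toLp_sub]

lemma pt_smul (t a b : ℝ) : t • pt a b = pt (t*a) (t*b) := by
  simp [pt, ← WithLp.toLp_smul]

lemma pt_congr {a b c d : ℝ} (h1 : a = c) (h2 : b = d) : pt a b = pt c d := by rw [h1, h2]

lemma pt_zero : pt 0 0 = 0 := by
  have : (0 : EuclideanSpace ℝ (Fin 2)) = (WithLp.equiv 2 (Fin 2 → ℝ)).symm ![0,0] := by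
    apply (WithLp.equiv 2 (Fin 2 → ℝ)).symm_apply_eq.mpr ?_
    ext i; fin_cases i <;> rfl
  rw [pt, this]

lemma pt_norm (a b : ℝ) : ‖pt a b‖ = Real.sqrt (a^2 + b^2) := by
  rw [EuclideanSpace.norm_eq]
  simp [pt, Fin.sum_univ_two, Real.norm_eq_abs, sq_abs]

lemma pt_ge (a b r : ℝ) (hr : 0 ≤ r) (h : r^2 ≤ a^2+b^2) : r ≤ ‖pt a b‖ := by
  rw [pt_norm]
  rcases le_or_gt r 0 with h0 | h0
  · exact le_trans h0 (Real.sqrt_nonneg _)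
  · exact (Real.le_sqrt h0.le (by positivity)).mpr h

lemma int3 (m : ℤ) : ((m:ℝ) ≤ -1 ∨ (m:ℝ) = 0 ∨ 1 ≤ (m:ℝ)) := by
  obtain h|h|h : m ≤ -1 ∨ m = 0 ∨ 1 ≤ m := by omega
  · left; exact_mod_cast h
  · right; left; exact_mod_cast h
  · right; right; exact_mod_cast h

lemma int4 (n : ℤ) : ((n:ℝ) ≤ -2 ∨ (n:ℝ) = -1 ∨ (n:ℝ) = 0 ∨ 1 ≤ (n:ℝ)) := by
  obtain h|h|h|h : n ≤ -2 ∨ n = -1 ∨ n = 0 ∨ 1 ≤ n := by omega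
  · left; exact_mod_cast h
  · right; left; exact_mod_cast h
  · right; right; left; exact_mod_cast h
  · right; right; right; exact_mod_cast h

lemma lemZR (x y r μ ν : ℝ) (hy : 0 < y) (hr0 : 0 ≤ r)
    (A1 : 2*r ≤ 1) (A2 : 2*r ≤ y)
    (hmc : μ ≤ -1 ∨ μ = 0 ∨ 1 ≤ μ) (hnc : ν ≤ -1 ∨ ν = 0 ∨ 1 ≤ ν)
    (h : ¬(μ = 0 ∧ ν = 0)) :
    (2*r)^2 ≤ (μ + ν*x)^2 + (ν*y)^2 := by
  obtain hn | hn | hn := hnc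
  · have : ν*y ≤ -y := by nlinarith
    nlinarith [sq_nonneg (μ + ν*x)]
  · subst hn
    obtain hm | hm | hm := hmc
    · nlinarith
    · exact absurd ⟨hm, rfl⟩ h
    · nlinarith
  · have : y ≤ ν*y := by nlinarith
    nlinarith [sq_nonneg (μ + ν*x)]

lemma lemBR (x y r R μ ν : ℝ) (hx0 : 0 ≤ x) (hx1 : x ≤ 1/2) (hy : 0 < y) (hr0 : 0 ≤ r)
    (hR0 : 0 ≤ R) (A2 : 2*r ≤ y) (A3 : 2*r ≤ R) (A4 : 2*r ≤ 2*y - R)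
    (A5 : x^2 + (y-R)^2 = 4*r^2)
    (hmc : μ ≤ -1 ∨ μ = 0 ∨ 1 ≤ μ) (hnc : ν ≤ -2 ∨ ν = -1 ∨ ν = 0 ∨ 1 ≤ ν) :
    (2*r)^2 ≤ (μ + ν*x)^2 + (R + ν*y)^2 := by
  obtain hn | hn | hn | hn := hnc
  · have : R + ν*y ≤ -(2*r) := by nlinarith
    nlinarith [sq_nonneg (μ + ν*x)]
  · subst hn
    obtain hm | hm | hm := hmc
    · have h1 : μ + (-1)*x ≤ -x := by nlinarith
      have h2 : x^2 ≤ (μ + (-1)*x)^2 := by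
        nlinarith [mul_nonneg (by linarith : (0:ℝ) ≤ -(μ + (-1)*x + x)) (by linarith : (0:ℝ) ≤ x - (μ + (-1)*x))]
      nlinarith
    · subst hm; nlinarith
    · have h1 : x ≤ μ + (-1)*x := by nlinarith
      have h2 : x^2 ≤ (μ + (-1)*x)^2 := by
        nlinarith [mul_nonneg (by linarith : (0:ℝ) ≤ μ + (-1)*x - x) (by linarith : (0:ℝ) ≤ μ + (-1)*x + x)]
      nlinarith
  · subst hn
    nlinarith [sq_nonneg μ]
  · have : 2*r ≤ R + ν*y := by nlinarith
    nlinarith [sq_nonneg (μ + ν*x)]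

set_option maxHeartbeats 1000000 in
lemma lemAR (x y r R μ ν : ℝ) (hx0 : 0 ≤ x) (hx1 : x ≤ 1/2) (hy : 0 < y) (hr0 : 0 ≤ r)
    (hR0 : 0 ≤ R) (A1 : 2*r ≤ 1) (A2 : 2*r ≤ y) (A4 : 2*r ≤ 2*y - R)
    (A6 : 1/4 + R^2/4 = 4*r^2) (A7 : 4*r^2 ≤ (1/2-x)^2 + (y-R/2)^2)
    (hmc : μ ≤ -1 ∨ μ = 0 ∨ 1 ≤ μ) (hnc : ν ≤ -2 ∨ ν = -1 ∨ ν = 0 ∨ 1 ≤ ν) :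
    (2*r)^2 ≤ (1/2 + μ + ν*x)^2 + (R/2 + ν*y)^2 := by
  obtain hn | hn | hn | hn := hnc
  · have : R/2 + ν*y ≤ -(2*r) := by nlinarith
    nlinarith [sq_nonneg (1/2 + μ + ν*x)]
  · subst hn
    obtain hm | hm | hm := hmc
    · have h1 : 1/2 + μ + (-1)*x ≤ -(1/2 + x) := by nlinarith
      have h2 : (1/2-x)^2 ≤ (1/2 + μ + (-1)*x)^2 := by
        nlinarith [mul_nonneg (by linarith : (0:ℝ) ≤ -(1/2 + μ + (-1)*x + (1/2-x))) (by linarith : (0:ℝ) ≤ (1/2-x) - (1/2 + μ + (-1)*x))]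
      nlinarith
    · subst hm; nlinarith
    · have h1 : 2*r ≤ 1/2 + μ + (-1)*x := by nlinarith
      nlinarith [sq_nonneg (R/2 + (-1)*y)]
  · subst hn
    obtain hm | hm | hm := hmc
    · nlinarith [mul_nonneg (by linarith : (0:ℝ) ≤ -μ) (by linarith : (0:ℝ) ≤ -(1+μ))]
    · subst hm; nlinarith
    · nlinarith [mul_nonneg (by linarith : (0:ℝ) ≤ μ) (by linarith : (0:ℝ) ≤ 1+μ)]
  · have : 2*r ≤ R/2 + ν*y := by nlinarith
    nlinarith [sq_nonneg (1/2 + μ + ν*x)]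

section aux
variable {x y s r g q w : ℝ}

lemma aux_hx2 (hx0 : 0 ≤ x) (hx1 : x ≤ 1/2) : x^2 ≤ 1/4 := by nlinarith

lemma aux_hy2 (hg : g^2 = 3) (hg0 : 0 ≤ g) (hq0 : 0 ≤ q) (h : q + g/3 ≤ y) : 1/3 ≤ y^2 := by
  nlinarith

lemma aux_hsy (hy : 0 < y) (hy2 : 1/3 ≤ y^2) (hx2 : x^2 ≤ 1/4) (hs0 : 0 ≤ s)
    (hs2 : s^2 = 3 + 4*y^2 - 12*x^2) : y ≤ s := by nlinarith

lemma aux_hs4 (hy : 0 < y) (hxy : 1 ≤ x^2 + y^2) (hs0 : 0 ≤ s)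
    (hs2 : s^2 = 3 + 4*y^2 - 12*x^2) : s ≤ 4*y := by nlinarith

lemma aux_hT (hg : g^2 = 3) (hg0 : 0 ≤ g) (hq0 : 0 ≤ q) (hq2 : q^2 = 1/3 - x^2)
    (h : q + g/3 ≤ y) : 2*g/3*y ≤ x^2 + y^2 := by
  nlinarith [sq_nonneg (y - g/3 - q)]

lemma aux_hT2 (hg : g^2 = 3) (hg0 : 0 ≤ g) (hy : 0 < y) (hxy : 1 ≤ x^2 + y^2)
    (hT : 2*g/3*y ≤ x^2 + y^2) : 4/3*y^2 ≤ (x^2+y^2)^2 := by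
  have ha : 0 ≤ 2*g/3*y := by positivity
  have ha2 : (2*g/3*y)^2 = 4/3*y^2 := by linear_combination (4/9*y^2)*hg
  nlinarith [ha2, mul_nonneg (by linarith : (0:ℝ) ≤ x^2+y^2 - 2*g/3*y)
    (by linarith : (0:ℝ) ≤ x^2+y^2 + 2*g/3*y)]

lemma aux_H2a (hg : g^2 = 3) (hg0 : 0 ≤ g) (hw0 : 0 ≤ w) (hw2 : w^2 = 1 - x^2)
    (hc : g ≤ y) (h2 : y < w + g) : x^2 + (y - g)^2 ≤ 1 := by
  nlinarith

lemma aux_H2b (hg : g^2 = 3) (hg0 : 0 ≤ g) (hq0 : 0 ≤ q) (hq2 : q^2 = 1/3 - x^2)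
    (hx2 : x^2 ≤ 1/4) (hc : y ≤ g) (h1 : q + g/3 ≤ y) : x^2 + (y - g)^2 ≤ 1 := by
  have hq14 : g/6 ≤ q := by nlinarith
  have hqup : q ≤ g/3 := by nlinarith
  nlinarith

lemma aux_hT3 (hg : g^2 = 3) (hg0 : 0 ≤ g) (hy : 0 < y)
    (H2 : x^2 + (y - g)^2 ≤ 1) : (x^2+y^2+2)^2 ≤ 12*y^2 := by
  have h : x^2 + y^2 + 2 ≤ 2*g*y := by nlinarith
  nlinarith [mul_nonneg (mul_nonneg hg0 hy.le) hy.le, sq_nonneg (x^2+y^2+2)]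

set_option maxHeartbeats 1600000 in
lemma auxA2 (hy : 0 < y) (hxy : 1 ≤ x^2 + y^2) (hs2 : s^2 = 3 + 4*y^2 - 12*x^2)
    (hsy : y ≤ s) (hr0 : 0 ≤ r) (hr36 : 36*r^2 = 9*x^2 + (y-s)^2) : 2*r ≤ y := by
  have hys0 : y*y ≤ y*s := mul_le_mul_of_nonneg_left hsy hy.le
  have h36 : 36*r^2 ≤ 9*y^2 := by nlinarith
  nlinarith

set_option maxHeartbeats 1600000 in
lemma auxA4 (hy : 0 < y) (hy2 : 1/3 ≤ y^2) (hx2 : x^2 ≤ 1/4) (hs0 : 0 ≤ s)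
    (hs2 : s^2 = 3 + 4*y^2 - 12*x^2) (hsy : y ≤ s) (hr0 : 0 ≤ r)
    (hr36 : 36*r^2 = 9*x^2 + (y-s)^2) : 2*r ≤ 2*y - (4*y-s)/3 := by
  have hys0 : y*y ≤ y*s := mul_le_mul_of_nonneg_left hsy hy.le
  have h36 : 36*r^2 ≤ (2*y+s)^2 := by nlinarith
  nlinarith

set_option maxHeartbeats 1600000 in
lemma auxA3 (hy : 0 < y) (hy2 : 1/3 ≤ y^2) (hx2 : x^2 ≤ 1/4) (hs0 : 0 ≤ s)
    (hs2 : s^2 = 3 + 4*y^2 - 12*x^2) (hs4 : s ≤ 4*y) (hr0 : 0 ≤ r)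
    (hr36 : 36*r^2 = 9*x^2 + (y-s)^2) (hT2 : 4/3*y^2 ≤ (x^2+y^2)^2) :
    2*r ≤ (4*y-s)/3 := by
  have hb : 0 < 5*y^2 - 3*x^2 := by nlinarith
  have hsq : (2*y*s)^2 ≤ (5*y^2-3*x^2)^2 := by nlinarith
  have hys : 2*y*s ≤ 5*y^2 - 3*x^2 := by
    nlinarith [mul_nonneg (mul_nonneg (by norm_num : (0:ℝ) ≤ 2) hy.le) hs0]
  have hr6 : 36*r^2 ≤ (4*y-s)^2 := by nlinarith
  nlinarith

set_option maxHeartbeats 1600000 in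
lemma auxA1 (hy : 0 < y) (hx2 : x^2 ≤ 1/4) (hs0 : 0 ≤ s)
    (hs2 : s^2 = 3 + 4*y^2 - 12*x^2) (hr0 : 0 ≤ r)
    (hr36 : 36*r^2 = 9*x^2 + (y-s)^2) (hT3 : (x^2+y^2+2)^2 ≤ 12*y^2) :
    2*r ≤ 1 := by
  have hys2 : 5*y^2 - 3*x^2 - 6 ≤ 2*y*s := by
    rcases le_or_gt (5*y^2 - 3*x^2 - 6) 0 with hc | hc
    · nlinarith [mul_nonneg hy.le hs0]
    · have hsq : (5*y^2-3*x^2-6)^2 ≤ (2*y*s)^2 := by nlinarith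
      nlinarith [mul_nonneg hy.le hs0]
  have h36 : 36*r^2 ≤ 9 := by nlinarith
  nlinarith

set_option maxHeartbeats 1600000 in
lemma auxA7 (hx0 : 0 ≤ x) (hx1 : x ≤ 1/2) (hy : 0 < y) (hy2 : 1/3 ≤ y^2) (hs0 : 0 ≤ s)
    (hs2 : s^2 = 3 + 4*y^2 - 12*x^2) (hr36 : 36*r^2 = 9*x^2 + (y-s)^2)
    (hT2 : 4/3*y^2 ≤ (x^2+y^2)^2) :
    4*r^2 ≤ (1/2-x)^2 + (y-((4*y-s)/3)/2)^2 := by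
  have hc0 : 0 ≤ y^2 + 3*x - 3*x^2 := by
    nlinarith [sq_nonneg y, mul_nonneg hx0 (by linarith : (0:ℝ) ≤ 1 - x)]
  have hsq : (y^2 + 3*x - 3*x^2)^2 ≤ (y*s)^2 := by
    nlinarith [mul_nonneg hx0 (by linarith : (0:ℝ) ≤ 1/2 - x), sq_nonneg (y^2 - 3/4),
      sq_nonneg (x - 1/2), mul_nonneg (mul_nonneg hx0 hx0) (by linarith : (0:ℝ) ≤ 1/2 - x),
      sq_nonneg (x*(1-x)), hy.le, sq_nonneg (y^2-3/4+x-1/2)]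
  have hys : y^2 + 3*x - 3*x^2 ≤ y*s := by nlinarith [mul_nonneg hy.le hs0]
  nlinarith

end aux

lemma facts (x y : ℝ) (hxy : 1 ≤ x ^ 2 + y ^ 2) (hy : 0 < y) (hx0 : 0 ≤ x) (hx1 : x ≤ 1 / 2)
    (hreg1 : Real.sqrt (1 / 3 - x ^ 2) + Real.sqrt 3 / 3 ≤ y) (hreg2 : y < Real.sqrt (1 - x ^ 2) + Real.sqrt 3)
    (r R : ℝ) (hr : r = 1 / 6 * Real.sqrt (9 * x ^ 2 + (y - Real.sqrt (3 + 4 * y ^ 2 - 12 * x ^ 2)) ^ 2))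
    (hR : R = Real.sqrt (16 * r ^ 2 - 1)) :
    0 ≤ r ∧ 0 ≤ R ∧ 2*r ≤ 1 ∧ 2*r ≤ y ∧ 2*r ≤ R ∧ 2*r ≤ 2*y - R ∧
      x^2 + (y-R)^2 = 4*r^2 ∧ 1/4 + R^2/4 = 4*r^2 ∧ 4*r^2 ≤ (1/2-x)^2 + (y-R/2)^2 := by
  have h3 : (Real.sqrt 3)^2 = 3 := Real.sq_sqrt (by norm_num)
  have h30 : 0 ≤ Real.sqrt 3 := Real.sqrt_nonneg 3
  have hx2 : x^2 ≤ 1/4 := aux_hx2 hx0 hx1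
  have hq0 : 0 ≤ Real.sqrt (1/3 - x^2) := Real.sqrt_nonneg _
  have hq2 : (Real.sqrt (1/3 - x^2))^2 = 1/3 - x^2 := Real.sq_sqrt (by linarith)
  have hreg1' : Real.sqrt (1/3 - x^2) + Real.sqrt 3/3 ≤ y := by
    convert hreg1 using 4 <;> norm_num
  have hy2 : 1/3 ≤ y^2 := aux_hy2 h3 h30 hq0 hreg1'
  have harg : 0 ≤ 3 + 4*y^2 - 12*x^2 := by linarith
  have hs0 : 0 ≤ Real.sqrt (3 + 4*y^2 - 12*x^2) := Real.sqrt_nonneg _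
  have hs2 : (Real.sqrt (3 + 4*y^2 - 12*x^2))^2 = 3 + 4*y^2 - 12*x^2 := Real.sq_sqrt harg
  set s := Real.sqrt (3 + 4*y^2 - 12*x^2) with hsdef
  have hsy : y ≤ s := aux_hsy hy hy2 hx2 hs0 hs2
  have hs4 : s ≤ 4*y := aux_hs4 hy hxy hs0 hs2
  have hr0 : 0 ≤ r := by rw [hr]; positivity
  have hr36 : 36*r^2 = 9*x^2 + (y-s)^2 := by
    rw [hr, mul_pow, Real.sq_sqrt (by positivity)]; ring
  have hRid : 16*r^2 - 1 = ((4*y-s)/3)^2 := by linear_combination (4/9)*hr36 + (1/3)*hs2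
  have hR4 : R = (4*y-s)/3 := by rw [hR, hRid, Real.sqrt_sq (by linarith)]
  have hR0 : 0 ≤ R := by rw [hR4]; linarith
  have hRsq : R^2 = 16*r^2 - 1 := by rw [hR4]; linarith [hRid]
  have A6 : 1/4 + R^2/4 = 4*r^2 := by linarith [hRsq]
  have A5 : x^2 + (y-R)^2 = 4*r^2 := by rw [hR4]; linear_combination (-1/9)*hr36
  have A2 : 2*r ≤ y := auxA2 hy hxy hs2 hsy hr0 hr36
  have A4 : 2*r ≤ 2*y - R := by rw [hR4]; exact auxA4 hy hy2 hx2 hs0 hs2 hsy hr0 hr36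
  have hT : 2*Real.sqrt 3/3*y ≤ x^2 + y^2 := aux_hT h3 h30 hq0 hq2 hreg1'
  have hT2 : 4/3*y^2 ≤ (x^2+y^2)^2 := aux_hT2 h3 h30 hy hxy hT
  have A3 : 2*r ≤ R := by rw [hR4]; exact auxA3 hy hy2 hx2 hs0 hs2 hs4 hr0 hr36 hT2
  have H2 : x^2 + (y - Real.sqrt 3)^2 ≤ 1 := by
    rcases le_or_gt (Real.sqrt 3) y with hc | hc
    · have h1x : (0:ℝ) ≤ 1 - x^2 := by linarith
      exact aux_H2a h3 h30 (Real.sqrt_nonneg (1-x^2)) (Real.sq_sqrt h1x) hc hreg2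
    · exact aux_H2b h3 h30 hq0 hq2 hx2 hc.le hreg1'
  have hT3 : (x^2+y^2+2)^2 ≤ 12*y^2 := aux_hT3 h3 h30 hy H2
  have A1 : 2*r ≤ 1 := auxA1 hy hx2 hs0 hs2 hr0 hr36 hT3
  have A7 : 4*r^2 ≤ (1/2-x)^2 + (y-R/2)^2 := by
    rw [hR4]; exact auxA7 hx0 hx1 hy hy2 hs0 hs2 hr36 hT2
  exact ⟨hr0, hR0, A1, A2, A3, A4, A5, A6, A7⟩

theorem three_circles_packing_R2 (x y : ℝ) (hxy : 1 ≤ x ^ 2 + y ^ 2) (hy : 0 < y) (hx0 : 0 ≤ x) (hx1 : x ≤ 1 / 2)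
    (hreg1 : Real.sqrt (1 / 3 - x ^ 2) + Real.sqrt 3 / 3 ≤ y) (hreg2 : y < Real.sqrt (1 - x ^ 2) + Real.sqrt 3)
    (r R : ℝ) (hr : r = 1 / 6 * Real.sqrt (9 * x ^ 2 + (y - Real.sqrt (3 + 4 * y ^ 2 - 12 * x ^ 2)) ^ 2))
    (hR : R = Real.sqrt (16 * r ^ 2 - 1))
    : IsPacking x y r ![pt 0 0, pt (1 / 2) (-R / 2), pt (1 / 2) (R / 2)] := by
  obtain ⟨hr0, hR0, A1, A2, A3, A4, A5, A6, A7⟩ :=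
    facts x y hxy hy hx0 hx1 hreg1 hreg2 r R hr hR
  intro i j l hl hne
  obtain ⟨m, n, rfl⟩ := hl
  have h2r0 : 0 ≤ 2*r := by linarith
  have hptE : ∀ a b c d : ℝ, pt a b - pt c d + ((m:ℝ) • pt 1 0 + (n:ℝ) • pt x y)
      = pt (a - c + ((m:ℝ) + (n:ℝ)*x)) (b - d + (n:ℝ)*y) := by
    intro a b c d
    rw [pt_smul, pt_smul, pt_add, pt_sub, pt_add]
    exact pt_congr (by ring) (by ring)
  have hZ : (¬((m:ℝ) • pt 1 0 + (n:ℝ) • pt x y = 0)) → ¬((m:ℝ) = 0 ∧ (n:ℝ) = 0) := by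
    intro hl0
    rintro ⟨h1, h2⟩
    apply hl0
    have hm0 : m = 0 := by exact_mod_cast h1
    have hn0 : n = 0 := by exact_mod_cast h2
    subst hm0; subst hn0
    simp
  fin_cases i <;> fin_cases j
  · -- (0,0)
    show 2*r ≤ ‖pt 0 0 - pt 0 0 + ((m:ℝ) • pt 1 0 + (n:ℝ) • pt x y)‖
    rw [hptE]
    refine pt_ge _ _ _ h2r0 ?_
    have hmn := hZ (hne.resolve_left (by simp))
    exact (lemZR x y r (m:ℝ) (n:ℝ) hy hr0 A1 A2 (int3 m) (int3 n) hmn).trans_eq (by ring)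
  · -- (0,1)
    show 2*r ≤ ‖pt 0 0 - pt (1/2) (-R/2) + ((m:ℝ) • pt 1 0 + (n:ℝ) • pt x y)‖
    rw [hptE]
    refine pt_ge _ _ _ h2r0 ?_
    have hmc := int3 (m-1); push_cast at hmc
    exact (lemAR x y r R ((m:ℝ)-1) (n:ℝ) hx0 hx1 hy hr0 hR0 A1 A2 A4 A6 A7 hmc (int4 n)).trans_eq (by ring)
  · -- (0,2)
    show 2*r ≤ ‖pt 0 0 - pt (1/2) (R/2) + ((m:ℝ) • pt 1 0 + (n:ℝ) • pt x y)‖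
    rw [hptE]
    refine pt_ge _ _ _ h2r0 ?_
    have hmc := int3 (-m); push_cast at hmc
    have hnc := int4 (-n); push_cast at hnc
    exact (lemAR x y r R (-(m:ℝ)) (-(n:ℝ)) hx0 hx1 hy hr0 hR0 A1 A2 A4 A6 A7 hmc hnc).trans_eq (by ring)
  · -- (1,0)
    show 2*r ≤ ‖pt (1/2) (-R/2) - pt 0 0 + ((m:ℝ) • pt 1 0 + (n:ℝ) • pt x y)‖
    rw [hptE]
    refine pt_ge _ _ _ h2r0 ?_
    have hmc := int3 (-1-m); push_cast at hmc
    have hnc := int4 (-n); push_cast at hnc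
    exact (lemAR x y r R (-1-(m:ℝ)) (-(n:ℝ)) hx0 hx1 hy hr0 hR0 A1 A2 A4 A6 A7 hmc hnc).trans_eq (by ring)
  · -- (1,1)
    show 2*r ≤ ‖pt (1/2) (-R/2) - pt (1/2) (-R/2) + ((m:ℝ) • pt 1 0 + (n:ℝ) • pt x y)‖
    rw [hptE]
    refine pt_ge _ _ _ h2r0 ?_
    have hmn := hZ (hne.resolve_left (by simp))
    exact (lemZR x y r (m:ℝ) (n:ℝ) hy hr0 A1 A2 (int3 m) (int3 n) hmn).trans_eq (by ring)
  · -- (1,2)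
    show 2*r ≤ ‖pt (1/2) (-R/2) - pt (1/2) (R/2) + ((m:ℝ) • pt 1 0 + (n:ℝ) • pt x y)‖
    rw [hptE]
    refine pt_ge _ _ _ h2r0 ?_
    have hmc := int3 (-m); push_cast at hmc
    have hnc := int4 (-n); push_cast at hnc
    exact (lemBR x y r R (-(m:ℝ)) (-(n:ℝ)) hx0 hx1 hy hr0 hR0 A2 A3 A4 A5 hmc hnc).trans_eq (by ring)
  · -- (2,0)
    show 2*r ≤ ‖pt (1/2) (R/2) - pt 0 0 + ((m:ℝ) • pt 1 0 + (n:ℝ) • pt x y)‖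
    rw [hptE]
    refine pt_ge _ _ _ h2r0 ?_
    exact (lemAR x y r R (m:ℝ) (n:ℝ) hx0 hx1 hy hr0 hR0 A1 A2 A4 A6 A7 (int3 m) (int4 n)).trans_eq (by ring)
  · -- (2,1)
    show 2*r ≤ ‖pt (1/2) (R/2) - pt (1/2) (-R/2) + ((m:ℝ) • pt 1 0 + (n:ℝ) • pt x y)‖
    rw [hptE]
    refine pt_ge _ _ _ h2r0 ?_
    exact (lemBR x y r R (m:ℝ) (n:ℝ) hx0 hx1 hy hr0 hR0 A2 A3 A4 A5 (int3 m) (int4 n)).trans_eq (by ring)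
  · -- (2,2)
    show 2*r ≤ ‖pt (1/2) (R/2) - pt (1/2) (R/2) + ((m:ℝ) • pt 1 0 + (n:ℝ) • pt x y)‖
    rw [hptE]
    refine pt_ge _ _ _ h2r0 ?_
    have hmn := hZ (hne.resolve_left (by simp))
    exact (lemZR x y r (m:ℝ) (n:ℝ) hy hr0 A1 A2 (int3 m) (int3 n) hmn).trans_eq (by ring)
end
end

section
/- Let A, B, C, D be points in R^2 and d > 0 with ||A - B|| = ||B - C|| = ||C - D|| = d. Suppose the segments AB and CD are parallel, i.e., there exists a real number t with A - B = t * (C - D), and suppose A and D lie strictly on the same side of the line through B and C, i.e., the cross products cross(C - B, A - B) and cross(C - B, D - B) are both positive or both negative, where cross((a,b),(c,d')) = a*d' - b*c. Then ||A - D|| = d. -/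
/-!
Since `AB ∥ CD` with `‖A - B‖ = ‖C - D‖`, either `A - B = C - D` or `A - B = D - C`. In the first
case `D - B = (C - B) - (A - B)`, so the cross products with `C - B` have opposite signs and `A`, `D`
lie on opposite sides of `BC`. Hence `A - B = D - C`, so `ABCD` closes up as a parallelogram
with `A - D = B - C`.
-/

noncomputable section

/-- The scalar cross product of two vectors in the Euclidean plane. -/
def cross (u w : EuclideanSpace ℝ (Fin 2)) : ℝ :=
  u 0 * w 1 - u 1 * w 0

theorem cross_self_eq_zero (u : EuclideanSpace ℝ (Fin 2)) : cross u u = 0 := by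
  unfold cross
  ring

theorem cross_sub_right (u v w : EuclideanSpace ℝ (Fin 2)) :
    cross u (v - w) = cross u v - cross u w := by
  simp only [cross, PiLp.sub_apply]
  ring

theorem eq_or_eq_neg_of_eq_smul_of_norm_eq {E : Type*} [NormedAddCommGroup E] [NormedSpace ℝ E]
    {x y : E} {t : ℝ} (hy : y ≠ 0) (hx : x = t • y) (hxy : ‖x‖ = ‖y‖) : x = y ∨ x = -y := by
  rw [hx, norm_smul, Real.norm_eq_abs, mul_eq_right₀ (norm_ne_zero_iff.2 hy)] at hxy
  rcases abs_eq zero_le_one |>.1 hxy with rfl | rfl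
  · exact .inl (by rw [hx, one_smul])
  · exact .inr (by rw [hx, neg_one_smul])

theorem cross_sub_eq_neg_of_sub_eq {A B C D : EuclideanSpace ℝ (Fin 2)} (h : A - B = C - D) :
    cross (C - B) (D - B) = -cross (C - B) (A - B) := by
  have hDB : D - B = (C - B) - (A - B) := by rw [h]; abel
  rw [hDB, cross_sub_right, cross_self_eq_zero, zero_sub]

theorem parallel_chain_forces_tangency_general (A B C D : EuclideanSpace ℝ (Fin 2)) (d : ℝ)
    (hAB : ‖A - B‖ = d) (hBC : ‖B - C‖ = d) (hCD : ‖C - D‖ = d)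
    (hpar : ∃ t : ℝ, A - B = t • (C - D))
    (hside : (0 < cross (C - B) (A - B) ∧ 0 < cross (C - B) (D - B)) ∨
             (cross (C - B) (A - B) < 0 ∧ cross (C - B) (D - B) < 0)) :
    ‖A - D‖ = d := by
  obtain ⟨t, ht⟩ := hpar
  have hCD_ne : C - D ≠ 0 := by
    rintro hCD_zero
    rw [sub_eq_zero.1 hCD_zero, cross_self_eq_zero] at hside
    rcases hside with ⟨-, h⟩ | ⟨-, h⟩ <;> exact h.false
  rcases eq_or_eq_neg_of_eq_smul_of_norm_eq hCD_ne ht (hAB.trans hCD.symm) with h | h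
  · have hopposite := cross_sub_eq_neg_of_sub_eq h
    rcases hside with ⟨h₁, h₂⟩ | ⟨h₁, h₂⟩ <;> linarith
  · have hAD : A - D = B - C := by
      calc A - D = (A - B) + (B - C) + (C - D) := by abel
        _ = B - C := by rw [h]; abel
    rw [hAD, hBC]

theorem parallel_chain_forces_tangency (A B C D : EuclideanSpace ℝ (Fin 2)) (d : ℝ)
    (hd : 0 < d)
    (hAB : ‖A - B‖ = d) (hBC : ‖B - C‖ = d) (hCD : ‖C - D‖ = d)
    (hpar : ∃ t : ℝ, A - B = t • (C - D))
    (hside : (0 < cross (C - B) (A - B) ∧ 0 < cross (C - B) (D - B)) ∨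
             (cross (C - B) (A - B) < 0 ∧ cross (C - B) (D - B) < 0)) :
    ‖A - D‖ = d :=
  parallel_chain_forces_tangency_general A B C D d hAB hBC hCD hpar hside
end
end
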